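/- arXiv:1712.08848 — 9 statements merged into one kernel-verified Lean document; each statement's English description precedes it below -/
import Mathlib

section
/- For the hypergraph G consisting of all k-element subsets of [n] (with 2 ≤ k ≤ n), the number of acyclic orientations with all heads singletons (i.e., vertex-orientations where no vertices get identified) equals n!/(k−1)!. -/
/-!
An acyclic orientation with singleton heads is the orientation by minima of a linear order of the
vertices (a topological sort of its arcs). A `k`-set meets the first `n - k + 1` vertices of that
order, so its head is the first of them lying in it, and only this initial injective sequence
matters. Conversely, two different injective sequences of length `n - k + 1` are told apart by a
`k`-set that contains their two entries at the first position where they differ and avoids all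
earlier entries. So acyclic orientations correspond to injective sequences of length `n - k + 1`,
and there are `n! / (k - 1)!` of them.
-/

open Finset Relation

theorem exists_equiv_fin_lt_of_acyclic {α : Type*} [Fintype α] {r : α → α → Prop}
    (hr : ∀ a, ¬ TransGen r a a) :
    ∃ e : α ≃ Fin (Fintype.card α), ∀ a b, r a b → e a < e b := by
  let _ : PartialOrder α :=
    { le := ReflTransGen r
      le_refl := fun _ => .refl
      le_trans := fun _ _ _ => ReflTransGen.trans
      le_antisymm := fun a b hab hba => by
        obtain rfl | hab := reflTransGen_iff_eq_or_transGen.1 hab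
        · rfl
        · exact (hr _ (hab.trans_left hba)).elim }
  have hlt : ∀ a b, r a b → a < b := fun a b hab =>
    lt_of_le_not_ge (.single hab) fun hba => hr a (.head' hab hba)
  let _ : Fintype (LinearExtension α) := ‹Fintype α›
  let e := (Fintype.orderIsoFinOfCardEq (LinearExtension α) rfl).symm
  have hmono : StrictMono (toLinearExtension : α →o LinearExtension α) :=
    toLinearExtension.monotone.strictMono_of_injective fun _ _ h => h
  exact ⟨e.toEquiv, fun a b hab => e.strictMono (hmono (hlt a b hab))⟩

variable {α ι : Type*} {m : ℕ}

def headArc (E : ι → Finset α) (h : ι → α) (a b : α) : Prop :=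
  ∃ i, h i = a ∧ b ∈ E i ∧ b ≠ a

def OccursBefore (f : Fin m ↪ α) (a b : α) : Prop :=
  ∃ j, f j = a ∧ ∀ i ≤ j, f i ≠ b

instance (f : Fin m ↪ α) : IsTrans α (OccursBefore f) where
  trans := by
    rintro _ _ c ⟨j, rfl, hj⟩ ⟨l, rfl, hl⟩
    refine ⟨j, rfl, fun i hi => hl i (hi.trans ?_)⟩
    by_contra! hlj
    exact hj l hlj.le rfl

theorem occursBefore_irrefl (f : Fin m ↪ α) (a : α) : ¬ OccursBefore f a a := by
  rintro ⟨j, rfl, hj⟩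
  exact hj j le_rfl rfl

section

variable [DecidableEq α]

def firstHit (f : Fin m ↪ α) (U : Finset α) (hU : ∃ j, f j ∈ U) : α :=
  f (Fin.find (f · ∈ U) hU)

theorem firstHit_eq_iff {f : Fin m ↪ α} {U : Finset α} (hU : ∃ j, f j ∈ U) {j : Fin m} :
    firstHit f U hU = f j ↔ f j ∈ U ∧ ∀ i < j, f i ∉ U := by
  rw [firstHit, f.injective.eq_iff, Fin.find_eq_iff]

theorem firstHit_mem (f : Fin m ↪ α) {U : Finset α} (hU : ∃ j, f j ∈ U) :
    firstHit f U hU ∈ U :=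
  Fin.find_spec hU

theorem headArc_firstHit_le_occursBefore (E : ι → Finset α) (f : Fin m ↪ α)
    (hE : ∀ i, ∃ j, f j ∈ E i) :
    headArc E (fun i => firstHit f (E i) (hE i)) ≤ OccursBefore f := by
  rintro _ b ⟨i, rfl, hb, hne⟩
  refine ⟨_, rfl, fun l hl hlb => hne ?_⟩
  subst hlb
  show f l = firstHit f (E i) (hE i)
  rw [eq_comm, firstHit_eq_iff]
  exact ⟨hb, fun l' hl' => Fin.find_min (hE i) (hl'.trans_le hl)⟩

theorem not_transGen_headArc_firstHit (E : ι → Finset α) (f : Fin m ↪ α)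
    (hE : ∀ i, ∃ j, f j ∈ E i) (a : α) :
    ¬ TransGen (headArc E fun i => firstHit f (E i) (hE i)) a a := fun ha =>
  occursBefore_irrefl f a <| transGen_eq_self (r := OccursBefore f) ▸
    TransGen.mono (headArc_firstHit_le_occursBefore E f hE) a a ha

variable [Fintype α]

theorem exists_apply_mem_of_card_lt (f : Fin m ↪ α) {U : Finset α}
    (hU : Fintype.card α < m + #U) : ∃ j, f j ∈ U := by
  obtain ⟨x, hx⟩ := inter_nonempty_of_card_lt_card_add_card (subset_univ (univ.map f))
    (subset_univ U) (by simpa using hU)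
  obtain ⟨hxf, hxU⟩ := mem_inter.1 hx
  obtain ⟨j, -, rfl⟩ := mem_map.1 hxf
  exact ⟨j, hxU⟩

theorem val_add_card_le_of_forall_lt (e : α ≃ Fin (Fintype.card α)) {U : Finset α} {x : α}
    (hx : x ∈ U) (hlt : ∀ y ∈ U, y ≠ x → e x < e y) : (e x : ℕ) + #U ≤ Fintype.card α := by
  have hle : #(U.erase x) ≤ #(Ioi (e x)) :=
    card_le_card_of_injOn e (fun y hy => mem_Ioi.2 (hlt y (mem_of_mem_erase hy)
      (ne_of_mem_erase hy))) e.injective.injOn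
  rw [card_erase_of_mem hx, Fin.card_Ioi] at hle
  have := card_pos.2 ⟨x, hx⟩
  have := (e x).isLt
  omega

theorem exists_firstHit_eq_of_acyclic {E : ι → Finset α} {h : ι → α}
    (hmem : ∀ i, h i ∈ E i) (hacyc : ∀ a, ¬ TransGen (headArc E h) a a)
    (hm : m ≤ Fintype.card α) (hcard : ∀ i, Fintype.card α < m + #(E i)) :
    ∃ f : Fin m ↪ α, ∀ i hi, firstHit f (E i) hi = h i := by
  obtain ⟨e, he⟩ := exists_equiv_fin_lt_of_acyclic hacyc
  refine ⟨(Fin.castLEEmb hm).trans e.symm.toEmbedding, fun i hi => ?_⟩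
  have hhead : ∀ y ∈ E i, y ≠ h i → e (h i) < e y := fun y hy hne => he _ _ ⟨i, rfl, hy, hne⟩
  have hj : (e (h i) : ℕ) < m := by
    have := val_add_card_le_of_forall_lt e (hmem i) hhead
    have := hcard i
    omega
  have hfj : ((Fin.castLEEmb hm).trans e.symm.toEmbedding) ⟨e (h i), hj⟩ = h i := by simp
  rw [← hfj, firstHit_eq_iff, hfj]
  refine ⟨hmem i, fun l hl hlU => ?_⟩
  have hle : (e (h i) : ℕ) ≤ l := by
    by_cases hy : e.symm (Fin.castLE hm l) = h i
    · simp [← hy]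
    · exact Fin.le_iff_val_le_val.1 (by simpa using (hhead _ hlU hy).le)
  exact hl.not_ge hle

def firstHitOrientation {k : ℕ} (hm : Fintype.card α < m + k) (f : Fin m ↪ α) :
    {U : Finset α // #U = k} → α :=
  fun U => firstHit f U.1 (exists_apply_mem_of_card_lt f (by rw [U.2]; exact hm))

theorem firstHitOrientation_injective {k : ℕ} (hk : 2 ≤ k) (hmk : m + k ≤ Fintype.card α + 1)
    (hm : Fintype.card α < m + k) : Function.Injective (firstHitOrientation (k := k) hm) := by
  intro f g hfg
  by_contra hne
  have hex : ∃ j, f j ≠ g j := by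
    by_contra! h
    exact hne (DFunLike.ext _ _ h)
  set j := Fin.find _ hex
  have hagree : ∀ i < j, f i = g i := fun i hi => not_not.1 (Fin.find_min hex hi)
  set low := (Iio j).map f
  have hlow : ∀ {i}, f i ∈ low ↔ i < j := by simp [low]
  have hf : f j ∉ low := by simp [hlow]
  have hg : g j ∉ low := by
    simp only [low, mem_map, mem_Iio, not_exists, not_and]
    intro i hi hgi
    rw [hagree i hi] at hgi
    exact hi.ne (g.injective hgi)
  obtain ⟨U, hsub, hUlow, hUk⟩ := exists_subsuperset_card_eq (s := {f j, g j}) (t := lowᶜ)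
    (n := k) (by simp [insert_subset_iff, hf, hg]) (card_le_two.trans hk)
    (by rw [card_compl, card_map, Fin.card_Iio]; omega)
  have hfU : firstHitOrientation hm f ⟨U, hUk⟩ = f j :=
    (firstHit_eq_iff _).2 ⟨hsub (by simp), fun i hi hiU => mem_compl.1 (hUlow hiU) (hlow.2 hi)⟩
  have hgU : firstHitOrientation hm g ⟨U, hUk⟩ = g j :=
    (firstHit_eq_iff _).2 ⟨hsub (by simp), fun i hi hiU =>
      mem_compl.1 (hUlow hiU) (hagree i hi ▸ hlow.2 hi)⟩
  exact Fin.find_spec hex (hfU.symm.trans (congrFun hfg _ ▸ hgU))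

end

/-- For the hypergraph of all `k`-element subsets of `[n]` (`2 ≤ k ≤ n`), the
number of acyclic orientations with all heads singletons equals `n!/(k-1)!`. -/
theorem stmt3 (n k : ℕ) (hk : 2 ≤ k) (hkn : k ≤ n) :
    {h : {U : Finset (Fin n) // U.card = k} → Fin n |
      (∀ U, h U ∈ U.1) ∧
      (∀ a : Fin n, ¬ Relation.TransGen
        (fun a b => ∃ U, h U = a ∧ b ∈ U.1 ∧ b ≠ a) a a)}.ncard
      = Nat.factorial n / Nat.factorial (k - 1) := by
  have hm : Fintype.card (Fin n) < n - k + 1 + k := by simp; omega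
  trans (Set.range (firstHitOrientation (k := k) hm)).ncard
  · congr 1
    ext h
    constructor
    · rintro ⟨hmem, hacyc⟩
      obtain ⟨f, hf⟩ := exists_firstHit_eq_of_acyclic (m := n - k + 1) hmem hacyc (by simp; omega)
        (fun U => by simpa [U.2] using hm)
      exact ⟨f, funext fun U => hf U _⟩
    · rintro ⟨f, rfl⟩
      exact ⟨fun U => firstHit_mem f _, not_transGen_headArc_firstHit Subtype.val f _⟩
  rw [Set.ncard_range_of_injective (firstHitOrientation_injective hk (by simp; omega) hm),
    Nat.card_eq_fintype_card, Fintype.card_embedding_eq, Fintype.card_fin, Fintype.card_fin,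
    Nat.descFactorial_eq_div (by omega), show n - (n - k + 1) = k - 1 by omega]
end

section
/- The acyclic orientations with singleton heads of the hypergraph of all k-subsets of [n] are in bijection with set compositions of [n] of the form ({a_1},{a_2},...,{a_{n−k+1}}, B) where a_1,...,a_{n−k+1} are distinct elements and B is the remaining (k−1)-element set: given such a composition, orient each hyperedge U with head the element of U appearing in the earliest part. -/
/-!
A composition orients every edge from its earliest element, so along an arc the position in the
composition strictly increases and the orientation is acyclic. Conversely, a topological order of
an acyclic orientation puts the head of every `k`-set first among its elements, hence among the
first `n - k + 1`; listing those first `n - k + 1` vertices recovers the orientation. Two different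
compositions are told apart by a `k`-set containing the first entries where they differ and none of
the entries before: this set exists because `2 ≤ k ≤ n`.
-/

/-- Given a sequence `a` of elements of `[n]` (the singleton parts of a set
composition `({a_1},...,{a_{n-k+1}}, B)`), orient the hyperedge `U` with head
the element of `U` appearing in the earliest part. -/
noncomputable def compositionHead {n k : ℕ} (a : Fin (n - k + 1) → Fin n)
    (U : Finset (Fin n)) (hU : U.Nonempty) : Fin n :=
  if h : (Finset.univ.filter (fun j => a j ∈ U)).Nonempty then
    a ((Finset.univ.filter (fun j => a j ∈ U)).min' h)
  else U.min' hU

open Finset Relation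

section Acyclic

variable {α : Type*} {R : α → α → Prop}

theorem not_transGen_self_of_lt {β : Type*} [Preorder β] (f : α → β)
    (hf : ∀ x y, R x y → f x < f y) (v : α) : ¬ TransGen R v v := fun hv =>
  lt_irrefl (f v) (by simpa only [transGen_eq_self] using hv.lift f hf)

theorem exists_equiv_fin_lt_of_acyclic_s4 [Fintype α] {n : ℕ} (hn : Fintype.card α = n)
    (hR : ∀ v, ¬ TransGen R v v) : ∃ e : α ≃ Fin n, ∀ x y, R x y → e x < e y := by
  classical
  let g : α → ℕ := fun x => #{z | TransGen R z x}
  have hg : ∀ x y, R x y → g x < g y := fun x y hxy => by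
    refine card_lt_card ((ssubset_iff_of_subset fun z hz => ?_).2 ⟨x, ?_, ?_⟩)
    · simp only [mem_filter, mem_univ, true_and] at hz ⊢
      exact hz.tail hxy
    · simpa using TransGen.single hxy
    · simpa using hR x
  let e₀ := Fintype.equivFinOfCardEq hn
  have hτ := Tuple.monotone_sort (g ∘ e₀.symm)
  generalize Tuple.sort (g ∘ e₀.symm) = τ at hτ
  refine ⟨e₀.trans τ.symm, fun x y hxy => lt_of_not_ge fun hle => ?_⟩
  have := hτ hle
  simp only [Function.comp_apply, Equiv.trans_apply, Equiv.apply_symm_apply,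
    Equiv.symm_apply_apply] at this
  exact (hg x y hxy).not_ge this

end Acyclic

theorem exists_mem_of_injective {α : Type*} [Fintype α] {m : ℕ} {a : Fin m → α}
    (ha : Function.Injective a) {U : Finset α} (hU : Fintype.card α < m + #U) :
    ∃ j, a j ∈ U := by
  classical
  have hcard : #(univ.image a) = m := by rw [card_image_of_injective _ ha, card_fin]
  obtain ⟨x, hx⟩ := inter_nonempty_of_card_lt_card_add_card (subset_univ (univ.image a))
    (subset_univ U) (by rwa [card_univ, hcard])
  obtain ⟨j, -, rfl⟩ := mem_image.mp (mem_inter.mp hx).1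
  exact ⟨j, (mem_inter.mp hx).2⟩

section compositionHead

variable {n k : ℕ} {a : Fin (n - k + 1) → Fin n} {U : Finset (Fin n)}

theorem compositionHead_mem (hU : U.Nonempty) : compositionHead a U hU ∈ U := by
  unfold compositionHead
  split_ifs with h
  · exact (mem_filter.mp (min'_mem _ h)).2
  · exact min'_mem _ _

theorem compositionHead_eq (hU : U.Nonempty) {j : Fin (n - k + 1)} (hj : a j ∈ U)
    (hbefore : ∀ i < j, a i ∉ U) : compositionHead a U hU = a j := by
  have hjF : j ∈ univ.filter (fun i => a i ∈ U) := by simpa using hj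
  rw [compositionHead, dif_pos ⟨j, hjF⟩]
  exact congrArg a <| le_antisymm (min'_le _ _ hjF)
    (le_min' _ _ _ fun i hi => le_of_not_gt fun hij => hbefore i hij (mem_filter.mp hi).2)

theorem exists_compositionHead_eq (hU : U.Nonempty) (h : ∃ j, a j ∈ U) :
    ∃ j, a j ∈ U ∧ (∀ i < j, a i ∉ U) ∧ compositionHead a U hU = a j := by
  obtain ⟨j, hj⟩ := h
  have hF : (univ.filter fun j => a j ∈ U).Nonempty := ⟨j, by simpa using hj⟩
  have hmem := (mem_filter.mp (min'_mem _ hF)).2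
  have hbefore : ∀ i < (univ.filter fun j => a j ∈ U).min' hF, a i ∉ U :=
    fun i hij hi => (min'_le _ _ (by simpa using hi)).not_gt hij
  exact ⟨_, hmem, hbefore, compositionHead_eq hU hmem hbefore⟩

def HeadArc {ι α : Type*} (edge : ι → Finset α) (h : ι → α) (x y : α) : Prop :=
  ∃ i, h i = x ∧ y ∈ edge i ∧ y ≠ x

theorem compositionHead_acyclic {ι : Type*} (edge : ι → Finset (Fin n))
    (hne : ∀ i, (edge i).Nonempty) (hcard : ∀ i, k ≤ #(edge i))
    (ha : Function.Injective a) (v : Fin n) :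
    ¬ TransGen (HeadArc edge fun i => compositionHead a (edge i) (hne i)) v v := by
  -- the position of a vertex in the composition, `⊤` on the last block
  let pos : Fin n → WithTop (Fin (n - k + 1)) := fun x => (univ.filter (a · = x)).inf (↑)
  refine not_transGen_self_of_lt pos (fun x y ⟨i, hx, hy, hyx⟩ => ?_) v
  have hmeet : ∃ j, a j ∈ edge i :=
    exists_mem_of_injective ha (by
      have := card_le_univ (edge i)
      rw [Fintype.card_fin] at this ⊢
      have := hcard i
      omega)
  obtain ⟨j, -, hbefore, hj⟩ := exists_compositionHead_eq (hne i) hmeet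
  calc pos x ≤ j := inf_le (by simp [← hx, hj])
    _ < pos y := (Finset.lt_inf_iff (WithTop.coe_lt_top j)).2 fun j' hj' => by
        have hj' : a j' = y := by simpa using hj'
        have hjj' : j ≤ j' := le_of_not_gt fun h => hbefore j' h (hj' ▸ hy)
        refine WithTop.coe_lt_coe.2 (hjj'.lt_of_ne ?_)
        rintro rfl
        exact hyx (hj' ▸ hj ▸ hx)

theorem exists_injective_compositionHead_eq (hkn : n - k + 1 ≤ n) {ι : Type*}
    (edge : ι → Finset (Fin n)) (hne : ∀ i, (edge i).Nonempty) (hcard : ∀ i, k ≤ #(edge i))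
    (h : ι → Fin n) (hmem : ∀ i, h i ∈ edge i)
    (hacyc : ∀ v, ¬ TransGen (HeadArc edge h) v v) :
    ∃ a : Fin (n - k + 1) → Fin n, Function.Injective a ∧
      ∀ i, compositionHead a (edge i) (hne i) = h i := by
  obtain ⟨σ, hσ⟩ := exists_equiv_fin_lt_of_acyclic_s4 (Fintype.card_fin n) hacyc
  refine ⟨σ.symm ∘ Fin.castLE hkn, σ.symm.injective.comp (Fin.castLE_injective hkn),
    fun i => ?_⟩
  have hfirst : ∀ y ∈ edge i, y ≠ h i → σ (h i) < σ y := fun y hy hyx =>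
    hσ _ _ ⟨i, rfl, hy, hyx⟩
  -- the `#(edge i) - 1` other elements of the edge have larger rank than its head
  have hrank : (σ (h i) : ℕ) < n - k + 1 := by
    have hle : #((edge i).erase (h i)) ≤ #(Ioi (σ (h i))) :=
      card_le_card_of_injOn σ (fun y hy => by
        have hy := mem_erase.mp hy
        simpa using hfirst y hy.2 hy.1) σ.injective.injOn
    rw [card_erase_of_mem (hmem i), Fin.card_Ioi] at hle
    have := hcard i
    omega
  have hj : (σ.symm ∘ Fin.castLE hkn) ⟨σ (h i), hrank⟩ = h i := σ.symm_apply_apply (h i)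
  refine (compositionHead_eq (hne i) (hj.symm ▸ hmem i) fun j hlt hjU => ?_).trans hj
  have hy : σ (σ.symm (Fin.castLE hkn j)) < σ (h i) := by simpa [Fin.lt_def] using hlt
  exact (hfirst _ hjU fun h' => hy.ne (congrArg σ h')).not_gt hy

theorem compositionHead_injective (hk : 2 ≤ k) (hkn : k ≤ n)
    {a a' : Fin (n - k + 1) → Fin n} (ha : Function.Injective a) (ha' : Function.Injective a')
    (heq : ∀ U : Finset (Fin n), #U = k → ∀ hU,
      compositionHead a U hU = compositionHead a' U hU) :
    a = a' := by
  classical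
  funext j
  induction j using WellFoundedLT.induction with
  | _ j ih =>
  let S := (Iio j).image a
  have haS : ∀ i, a i ∈ S → i < j := fun i hi => by
    obtain ⟨i', hi', hii'⟩ := mem_image.mp hi
    exact ha hii' ▸ mem_Iio.mp hi'
  have ha'S : ∀ i, a' i ∈ S → i < j := fun i hi => by
    obtain ⟨i', hi', hii'⟩ := mem_image.mp hi
    rw [ih i' (mem_Iio.mp hi')] at hii'
    exact ha' hii' ▸ mem_Iio.mp hi'
  have hpair : {a j, a' j} ⊆ Sᶜ := by
    simp only [insert_subset_iff, singleton_subset_iff, mem_compl]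
    exact ⟨fun h => (haS j h).false, fun h => (ha'S j h).false⟩
  have hS : #S < n - k + 1 := (card_image_le.trans (Fin.card_Iio j).le).trans_lt j.isLt
  obtain ⟨U, hpairU, hUS, hU⟩ := exists_subsuperset_card_eq hpair
    ((card_insert_le _ _).trans (by simpa using hk))
    (by rw [card_compl, Fintype.card_fin]; omega)
  have haU : a j ∈ U := hpairU (mem_insert_self _ _)
  have ha'U : a' j ∈ U := hpairU (mem_insert_of_mem (mem_singleton_self _))
  have hbefore : ∀ i < j, a i ∉ U := fun i hij hi =>
    mem_compl.mp (hUS hi) (mem_image_of_mem a (mem_Iio.mpr hij))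
  have hbefore' : ∀ i < j, a' i ∉ U := fun i hij => ih i hij ▸ hbefore i hij
  have hne : U.Nonempty := ⟨a j, haU⟩
  calc a j = compositionHead a U hne := (compositionHead_eq hne haU hbefore).symm
    _ = compositionHead a' U hne := heq U hU hne
    _ = a' j := compositionHead_eq hne ha'U hbefore'

end compositionHead

/-- The acyclic orientations with singleton heads of the hypergraph of all
`k`-subsets of `[n]` are in bijection with set compositions
`({a_1},...,{a_{n-k+1}}, B)` (i.e. injective sequences of `n-k+1` distinct
elements, `B` being the remaining `k-1` elements): the map orients each
hyperedge `U` with head the element of `U` in the earliest part. -/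
theorem stmt4 (n k : ℕ) (hk : 2 ≤ k) (hkn : k ≤ n) :
    Set.BijOn
      (fun (a : Fin (n - k + 1) → Fin n)
          (U : {U : Finset (Fin n) // U.card = k}) =>
        compositionHead a U.1 (Finset.card_pos.mp (by rw [U.2]; omega)))
      {a : Fin (n - k + 1) → Fin n | Function.Injective a}
      {h : {U : Finset (Fin n) // U.card = k} → Fin n |
        (∀ U, h U ∈ U.1) ∧
        (∀ v : Fin n, ¬ Relation.TransGen
          (fun x y => ∃ U, h U = x ∧ y ∈ U.1 ∧ y ≠ x) v v)} := by
  refine ⟨fun a ha => ⟨fun U => compositionHead_mem _,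
      compositionHead_acyclic Subtype.val _ (fun U => U.2.ge) ha⟩,
    fun a ha a' ha' heq => compositionHead_injective hk hkn ha ha' fun U hU _ =>
      congrFun heq ⟨U, hU⟩,
    fun h ⟨hmem, hacyc⟩ => ?_⟩
  obtain ⟨a, ha, hh⟩ := exists_injective_compositionHead_eq (by omega) Subtype.val _
    (fun U => U.2.ge) h hmem hacyc
  exact ⟨a, ha, funext hh⟩
end

section
/- For the hypergraph of all k-subsets of [n] and any acyclic orientation O with singleton heads, the Hasse diagram (transitive reduction) of the acyclic directed graph G/O is a tree: a directed path a_1 → a_2 → ⋯ → a_{n−k+1} followed by arcs from a_{n−k+1} to each of the remaining k−1 vertices. -/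
def KArc (n k : ℕ) (h : {U : Finset (Fin n) // U.card = k} → Fin n)
    (x y : Fin n) : Prop :=
  ∃ U, h U = x ∧ y ∈ U.1 ∧ y ≠ x

section Aux

variable {n k : ℕ} {h : {U : Finset (Fin n) // U.card = k} → Fin n}

theorem exists_min (hk : 2 ≤ k)
    (hhead : ∀ U, h U ∈ U.1)
    (hacyc : ∀ v : Fin n, ¬ Relation.TransGen (KArc n k h) v v)
    (T : Finset (Fin n)) (hcard : k ≤ T.card) :
    ∃ m, m ∈ T ∧ ∀ x ∈ T, x ≠ m → Relation.TransGen (KArc n k h) m x := by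
  classical
  set r := Relation.TransGen (KArc n k h) with hr
  set f : Fin n → ℕ := fun x => (T.filter (fun y => r y x)).card with hf
  have hdec : ∀ y ∈ T, ∀ x, r y x → f y < f x := by
    intro y hy x hyx
    apply Finset.card_lt_card
    constructor
    · intro z hz
      rw [Finset.mem_filter] at hz ⊢
      exact ⟨hz.1, hz.2.trans hyx⟩
    · intro hsub
      have : y ∈ T.filter (fun z => r z y) := hsub (by
        rw [Finset.mem_filter]; exact ⟨hy, hyx⟩)
      rw [Finset.mem_filter] at this
      exact hacyc y this.2
  have hTne : T.Nonempty := Finset.card_pos.mp (by omega)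
  obtain ⟨m, hmT, hmmin⟩ := T.exists_min_image f hTne
  have hmin : ∀ y ∈ T, ¬ r y m := by
    intro y hy hym
    exact absurd (hmmin y hy) (by simpa using hdec y hy m hym)
  refine ⟨m, hmT, ?_⟩
  intro x hxT hxm
  -- find m' minimal in T with m' = x ∨ r m' x
  set T' : Finset (Fin n) := T.filter (fun z => z = x ∨ r z x) with hT'
  have hT'ne : T'.Nonempty := ⟨x, by rw [hT', Finset.mem_filter]; exact ⟨hxT, Or.inl rfl⟩⟩
  obtain ⟨m', hm'T', hm'min⟩ := T'.exists_min_image f hT'ne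
  rw [hT', Finset.mem_filter] at hm'T'
  obtain ⟨hm'T, hm'x⟩ := hm'T'
  have hmin' : ∀ y ∈ T, ¬ r y m' := by
    intro y hy hym'
    have hyx : y = x ∨ r y x := by
      rcases hm'x with rfl | hx'
      · exact Or.inr hym'
      · exact Or.inr (hym'.trans hx')
    have hyT' : y ∈ T' := by rw [hT', Finset.mem_filter]; exact ⟨hy, hyx⟩
    exact absurd (hm'min y hyT') (by simpa using hdec y hy m' hym')
  -- m = m' via a common hyperedge
  have hmm' : m = m' := by
    by_contra hne
    have hsub : ({m, m'} : Finset (Fin n)) ⊆ T := by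
      intro z hz
      rw [Finset.mem_insert, Finset.mem_singleton] at hz
      rcases hz with rfl | rfl <;> assumption
    have hc2 : ({m, m'} : Finset (Fin n)).card ≤ k := by
      calc ({m, m'} : Finset (Fin n)).card ≤ 2 := Finset.card_insert_le _ _ |>.trans (by simp)
      _ ≤ k := hk
    obtain ⟨U, hsubU, hUT, hUcard⟩ := Finset.exists_subsuperset_card_eq hsub hc2 hcard
    set z := h ⟨U, hUcard⟩ with hz
    have hzU : z ∈ U := hhead ⟨U, hUcard⟩
    have hzT : z ∈ T := hUT hzU
    have harc : ∀ v ∈ U, v ≠ z → r z v := fun v hv hvz =>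
      Relation.TransGen.single ⟨⟨U, hUcard⟩, rfl, hv, hvz⟩
    have hmU : m ∈ U := hsubU (by simp)
    have hm'U : m' ∈ U := hsubU (by simp)
    rcases eq_or_ne z m with rfl | hzm
    · exact hmin' z hzT (harc m' hm'U (Ne.symm (by simpa using hne)))
    · rcases eq_or_ne z m' with rfl | hzm'
      · exact hmin z hzT (harc m hmU (by simpa using hne))
      · exact hmin z hzT (harc m hmU (fun e => hzm e.symm))
  subst hmm'
  rcases hm'x with rfl | hx'
  · exact absurd rfl hxm
  · exact hx'

end Aux

open Classical in
noncomputable def mino (n k : ℕ) (h : {U : Finset (Fin n) // U.card = k} → Fin n)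
    (npos : 0 < n) (S : Finset (Fin n)) : Fin n :=
  if hx : ∃ m, m ∈ S ∧ ∀ x ∈ S, x ≠ m → Relation.TransGen (KArc n k h) m x then
    hx.choose else ⟨0, npos⟩

noncomputable def seqS (n k : ℕ) (h : {U : Finset (Fin n) // U.card = k} → Fin n)
    (npos : 0 < n) : ℕ → Finset (Fin n)
  | 0 => Finset.univ
  | i + 1 => seqS n k h npos i \ {mino n k h npos (seqS n k h npos i)}

section Aux2

variable {n k : ℕ} {h : {U : Finset (Fin n) // U.card = k} → Fin n} {npos : 0 < n}

theorem memS (i : ℕ) (x : Fin n) :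
    x ∈ seqS n k h npos i ↔ ∀ j < i, x ≠ mino n k h npos (seqS n k h npos j) := by
  induction i with
  | zero => simp [seqS]
  | succ i ih =>
    rw [seqS, Finset.mem_sdiff, ih, Finset.mem_singleton]
    constructor
    · rintro ⟨h1, h2⟩ j hj
      rcases Nat.lt_succ_iff_lt_or_eq.mp hj with hj | rfl
      · exact h1 j hj
      · exact h2
    · intro h1
      exact ⟨fun j hj => h1 j (Nat.lt_succ_of_lt hj), h1 i (Nat.lt_succ_self i)⟩

theorem minoSpec (hk : 2 ≤ k)
    (hhead : ∀ U, h U ∈ U.1)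
    (hacyc : ∀ v : Fin n, ¬ Relation.TransGen (KArc n k h) v v)
    (S : Finset (Fin n)) (hcard : k ≤ S.card) :
    mino n k h npos S ∈ S ∧
      ∀ x ∈ S, x ≠ mino n k h npos S → Relation.TransGen (KArc n k h) (mino n k h npos S) x := by
  have hx : ∃ m, m ∈ S ∧ ∀ x ∈ S, x ≠ m → Relation.TransGen (KArc n k h) m x :=
    exists_min hk hhead hacyc S hcard
  have : mino n k h npos S = hx.choose := by rw [mino, dif_pos hx]
  rw [this]
  exact hx.choose_spec

end Aux2

/-- For the hypergraph of all `k`-subsets of `[n]` and any acyclic orientation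
with singleton heads, the Hasse diagram (set of covering relations of the
transitive closure) of `G/O` is a tree: a directed path
`a_1 → a_2 → ⋯ → a_{n-k+1}` followed by arcs from `a_{n-k+1}` to each of the
remaining `k-1` vertices. -/
theorem stmt5 (n k : ℕ) (hk : 2 ≤ k) (hkn : k ≤ n)
    (h : {U : Finset (Fin n) // U.card = k} → Fin n)
    (hhead : ∀ U, h U ∈ U.1)
    (hacyc : ∀ v : Fin n, ¬ Relation.TransGen (KArc n k h) v v) :
    ∃ a : Fin (n - k + 1) → Fin n, Function.Injective a ∧
      ∀ x y : Fin n,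
        (Relation.TransGen (KArc n k h) x y ∧
          ¬ ∃ z, Relation.TransGen (KArc n k h) x z ∧
                 Relation.TransGen (KArc n k h) z y) ↔
        ((∃ i : Fin (n - k), x = a i.castSucc ∧ y = a i.succ) ∨
          (x = a (Fin.last (n - k)) ∧ y ∉ Set.range a)) := by
  classical
  have npos : 0 < n := by omega
  set r := Relation.TransGen (KArc n k h) with hrdef
  set b : ℕ → Fin n := fun i => mino n k h npos (seqS n k h npos i) with hbdef
  -- cardinalities
  have hcard : ∀ i, i ≤ n - k + 1 → (seqS n k h npos i).card = n - i := by
    intro i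
    induction i with
    | zero => intro _; simp [seqS]
    | succ i ih =>
      intro hi1
      have hci := ih (by omega)
      have hmem := (@minoSpec n k h npos hk hhead hacyc (seqS n k h npos i)
        (by rw [hci]; omega)).1
      rw [seqS, Finset.card_sdiff_of_subset (Finset.singleton_subset_iff.mpr hmem),
        Finset.card_singleton, hci]
      omega
  have hspec : ∀ i ≤ n - k, b i ∈ seqS n k h npos i ∧
      ∀ x ∈ seqS n k h npos i, x ≠ b i → r (b i) x := by
    intro i hi
    exact @minoSpec n k h npos hk hhead hacyc (seqS n k h npos i)
      (by rw [hcard i (by omega)]; omega)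
  -- basic relational facts
  have hbmem : ∀ i j, i ≤ n - k → j ≤ n - k → i < j → r (b i) (b j) := by
    intro i j hi hj hij
    have hbjj : b j ∈ seqS n k h npos j := (hspec j hj).1
    have hne : ∀ j' < j, b j ≠ b j' := (memS j _).1 hbjj
    have hbji : b j ∈ seqS n k h npos i := (memS i _).2 (fun j' hj' => hne j' (by omega))
    exact (hspec i hi).2 _ hbji (hne i hij)
  have hnotin : ∀ y : Fin n, (∀ j ≤ n - k, y ≠ b j) → ∀ i ≤ n - k + 1,
      y ∈ seqS n k h npos i := by
    intro y hy i hi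
    exact (memS i _).2 (fun j hj => hy j (by omega))
  have hbB : ∀ i ≤ n - k, ∀ y : Fin n, (∀ j ≤ n - k, y ≠ b j) → r (b i) y := by
    intro i hi y hy
    exact (hspec i hi).2 y (hnotin y hy i (by omega)) (hy i hi)
  -- up-closedness
  have hB : ∀ i ≤ n - k + 1, ∀ x ∈ seqS n k h npos i, ∀ y, r x y → y ∈ seqS n k h npos i := by
    intro i
    induction i with
    | zero => intro _ x _ y _; simp [seqS]
    | succ i ih =>
      intro hi1 x hx y hxy
      have hi : i ≤ n - k := by omega
      rw [seqS, Finset.mem_sdiff, Finset.mem_singleton] at hx ⊢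
      refine ⟨ih (by omega) x hx.1 y hxy, ?_⟩
      intro hyb
      have hbx : r (b i) x := (hspec i hi).2 x hx.1 hx.2
      rw [hyb] at hxy
      exact hacyc x (Relation.TransGen.trans hxy hbx)
  -- elements outside the chain are maximal
  have hBdead : ∀ y : Fin n, (∀ j ≤ n - k, y ≠ b j) → ∀ x, ¬ r y x := by
    intro y hy x hyx
    have hyB : y ∈ seqS n k h npos (n - k + 1) := hnotin y hy (n - k + 1) le_rfl
    obtain ⟨w, hw⟩ : ∃ w, KArc n k h y w := by
      clear hyB hy
      induction hyx with
      | single h' => exact ⟨_, h'⟩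
      | tail _ _ ih => exact ih
    obtain ⟨U, hUy, hwU, hwy⟩ := hw
    have hsub : U.1 ⊆ seqS n k h npos (n - k + 1) := by
      intro v hv
      by_cases hvy : v = y
      · rw [hvy]; exact hyB
      · exact hB (n - k + 1) le_rfl y hyB v (Relation.TransGen.single ⟨U, hUy, hv, hvy⟩)
    have hle := Finset.card_le_card hsub
    rw [U.2, hcard (n - k + 1) le_rfl] at hle
    omega
  -- ordering
  have hord : ∀ i ≤ n - k, ∀ j ≤ n - k, r (b i) (b j) → i < j := by
    intro i hi j hj hij
    by_contra hc
    rcases Nat.lt_or_ge j i with hji | hji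
    · exact hacyc (b i) (Relation.TransGen.trans hij (hbmem j i hj hi hji))
    · have : i = j := by omega
      rw [this] at hij
      exact hacyc (b j) hij
  refine ⟨fun p => b p.val, ?_, ?_⟩
  · intro p q hpq
    have hp : (p : ℕ) ≤ n - k := by omega
    have hq : (q : ℕ) ≤ n - k := by omega
    rcases lt_trichotomy (p : ℕ) (q : ℕ) with hlt | heq | hgt
    · have hpq' : b (p : ℕ) = b (q : ℕ) := hpq
      exact absurd (hbmem p q hp hq hlt) (by rw [hpq']; exact hacyc _)
    · exact Fin.ext heq
    · have hpq' : b (p : ℕ) = b (q : ℕ) := hpq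
      exact absurd (hbmem q p hq hp hgt) (by rw [← hpq']; exact hacyc _)
  · have hrange : ∀ y : Fin n,
        y ∉ Set.range (fun p : Fin (n - k + 1) => b p.val) ↔ ∀ j ≤ n - k, y ≠ b j := by
      intro y
      simp only [Set.mem_range, not_exists]
      constructor
      · intro hy j hj he
        exact hy ⟨j, by omega⟩ he.symm
      · intro hy p he
        exact hy p.val (by omega) he.symm
    intro x y
    constructor
    · rintro ⟨hxy, hnz⟩
      have hx : ∃ i ≤ n - k, x = b i := by
        by_contra hc
        push_neg at hc
        exact hBdead x hc y hxy
      obtain ⟨i, hi, rfl⟩ := hx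
      by_cases hy : ∃ j ≤ n - k, y = b j
      · obtain ⟨j, hj, rfl⟩ := hy
        have hij : i < j := hord i hi j hj hxy
        have hj1 : j = i + 1 := by
          by_contra hne
          have h1 : i + 1 ≤ n - k := by omega
          exact hnz ⟨b (i + 1), hbmem i (i + 1) hi h1 (by omega),
            hbmem (i + 1) j h1 hj (by omega)⟩
        subst hj1
        exact Or.inl ⟨⟨i, by omega⟩, rfl, rfl⟩
      · push_neg at hy
        have hilast : i = n - k := by
          by_contra hne
          have h1 : i + 1 ≤ n - k := by omega
          exact hnz ⟨b (i + 1), hbmem i (i + 1) hi h1 (by omega), hbB (i + 1) h1 y hy⟩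
        subst hilast
        exact Or.inr ⟨rfl, (hrange y).mpr hy⟩
    · rintro (⟨p, rfl, rfl⟩ | ⟨rfl, hy⟩)
      · have hp : (p : ℕ) < n - k := p.isLt
        refine ⟨hbmem p.castSucc.val p.succ.val (by simp only [Fin.coe_castSucc]; omega) (by simp only [Fin.val_succ]; omega)
          (by simp), ?_⟩
        rintro ⟨z, hxz, hzy⟩
        by_cases hz : ∃ m ≤ n - k, z = b m
        · obtain ⟨m, hm, rfl⟩ := hz
          have h1 := hord p.castSucc.val (by simp only [Fin.coe_castSucc]; omega) m hm hxz
          have h2 := hord m hm p.succ.val (by simp only [Fin.val_succ]; omega) hzy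
          simp at h1 h2
          omega
        · push_neg at hz
          exact hBdead z hz _ hzy
      · have hyb := (hrange y).mp hy
        refine ⟨hbB (Fin.last (n - k)).val (by simp) y hyb, ?_⟩
        rintro ⟨z, hxz, hzy⟩
        by_cases hz : ∃ m ≤ n - k, z = b m
        · obtain ⟨m, hm, rfl⟩ := hz
          have h1 := hord (Fin.last (n - k)).val (by simp) m hm hxz
          simp at h1
          omega
        · push_neg at hz
          exact hBdead z hz _ hzy
end

section
/- If G is the hypergraph of a building set (every pairwise-intersecting pair of hyperedges has their union also a hyperedge), then for every acyclic orientation O of G with singleton heads, every vertex of the Hasse diagram of G/O has in-degree at most 1; consequently the Hasse diagram is a forest. -/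
/-- Arc relation of a singleton-head orientation of the hypergraph of a
building set: arcs from `h I` to every other vertex of `I`, for each member
`I` of the building set with at least two elements. -/
def BArc {n : ℕ} (B : Finset (Finset (Fin n))) (h : Finset (Fin n) → Fin n)
    (x y : Fin n) : Prop :=
  ∃ I ∈ B, 2 ≤ I.card ∧ h I = x ∧ y ∈ I ∧ y ≠ x

/-- Covering relation (Hasse diagram) of the partial order generated by the
arcs. -/
def BCover {n : ℕ} (B : Finset (Finset (Fin n))) (h : Finset (Fin n) → Fin n)
    (x y : Fin n) : Prop :=
  Relation.TransGen (BArc B h) x y ∧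
    ¬ ∃ z, Relation.TransGen (BArc B h) x z ∧ Relation.TransGen (BArc B h) z y

/-!
If `x` lies in two hyperedges `I` and `J`, then `I ∪ J` is a hyperedge whose head `m` lies
in, say, `I`. Were `h I ≠ m`, the arcs `h I → m` (inside `I`) and `m → h I` (inside `I ∪ J`)
would form a cycle; so `h I = m`, and `m` is either `h J` or points to it. Hence the heads of
any two hyperedges through `x` are equal or joined by an arc, which forbids two distinct
vertices from both covering `x`. A cycle in the Hasse diagram would then have, at a vertex `x`
covering no other vertex of the cycle, two distinct neighbours both covering `x`.
-/

open Finset Relation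

theorem SimpleGraph.isAcyclic_fromRel_of_leftUnique {V : Type*} {r : V → V → Prop}
    (hwf : WellFounded (flip r)) (hr : Relator.LeftUnique r) :
    (SimpleGraph.fromRel r).IsAcyclic := by
  classical
  intro v c hc
  obtain ⟨x, hx, hmin⟩ := hwf.has_min {z | z ∈ c.support} ⟨v, c.start_mem_support⟩
  have hc' := hc.rotate hx
  have covers : ∀ z ∈ (c.rotate x hx).support, (fromRel r).Adj x z → r z x :=
    fun z hz hadj => ((fromRel_adj _ _ _).mp hadj).2.resolve_left
      (hmin z ((c.mem_support_rotate_iff x hx).mp hz))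
  exact hc'.snd_ne_penultimate <| hr
    (covers _ (Walk.getVert_mem_support _ _) (Walk.adj_snd hc'.not_nil))
    (covers _ (Walk.getVert_mem_support _ _) (Walk.adj_penultimate hc'.not_nil).symm)

section

variable {n : ℕ} {B : Finset (Finset (Fin n))} {h : Finset (Fin n) → Fin n}

theorem head_eq_head_of_subset (hhead : ∀ I ∈ B, 2 ≤ I.card → h I ∈ I)
    (hacyc : ∀ v, ¬ TransGen (BArc B h) v v) {I K : Finset (Fin n)} (hI : I ∈ B) (hK : K ∈ B)
    (hIc : 2 ≤ I.card) (hIK : I ⊆ K) (hKI : h K ∈ I) : h I = h K := by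
  by_contra hne
  have down : BArc B h (h I) (h K) := ⟨I, hI, hIc, rfl, hKI, Ne.symm hne⟩
  have up : BArc B h (h K) (h I) :=
    ⟨K, hK, hIc.trans (card_le_card hIK), rfl, hIK (hhead I hI hIc), hne⟩
  exact hacyc _ (.tail (.single down) up)

theorem head_eq_or_bArc_of_head_union_mem (hhead : ∀ I ∈ B, 2 ≤ I.card → h I ∈ I)
    (hacyc : ∀ v, ¬ TransGen (BArc B h) v v) {I J : Finset (Fin n)} (hI : I ∈ B)
    (hIc : 2 ≤ I.card) (hJ : J ∈ B) (hJc : 2 ≤ J.card) (hU : I ∪ J ∈ B)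
    (hm : h (I ∪ J) ∈ I) : h I = h J ∨ BArc B h (h I) (h J) := by
  rw [head_eq_head_of_subset hhead hacyc hI hU hIc subset_union_left hm]
  by_cases hJm : h (I ∪ J) = h J
  · exact .inl hJm
  · exact .inr ⟨I ∪ J, hU, hIc.trans (card_le_card subset_union_left), rfl,
      subset_union_right (hhead J hJ hJc), Ne.symm hJm⟩

theorem heads_comparable_of_mem_inter
    (hclosed : ∀ I ∈ B, ∀ J ∈ B, (I ∩ J).Nonempty → I ∪ J ∈ B)
    (hhead : ∀ I ∈ B, 2 ≤ I.card → h I ∈ I) (hacyc : ∀ v, ¬ TransGen (BArc B h) v v)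
    {I J : Finset (Fin n)} {x : Fin n} (hI : I ∈ B) (hIc : 2 ≤ I.card) (hJ : J ∈ B)
    (hJc : 2 ≤ J.card) (hxI : x ∈ I) (hxJ : x ∈ J) :
    h I = h J ∨ BArc B h (h I) (h J) ∨ BArc B h (h J) (h I) := by
  have hU : I ∪ J ∈ B := hclosed I hI J hJ ⟨x, mem_inter.mpr ⟨hxI, hxJ⟩⟩
  rcases mem_union.mp (hhead _ hU (hIc.trans (card_le_card subset_union_left))) with hm | hm
  · exact (head_eq_or_bArc_of_head_union_mem hhead hacyc hI hIc hJ hJc hU hm).imp_right .inl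
  · rw [union_comm] at hU hm
    rcases head_eq_or_bArc_of_head_union_mem hhead hacyc hJ hJc hI hIc hU hm with heq | harc
    exacts [.inl heq.symm, .inr (.inr harc)]

theorem BCover.bArc {x y : Fin n} (hc : BCover B h y x) : BArc B h y x := by
  obtain ⟨hyx, hmin⟩ := hc
  cases hyx with
  | single hyx => exact hyx
  | tail hyz hzx => exact absurd ⟨_, hyz, .single hzx⟩ hmin

theorem BCover.leftUnique (hclosed : ∀ I ∈ B, ∀ J ∈ B, (I ∩ J).Nonempty → I ∪ J ∈ B)
    (hhead : ∀ I ∈ B, 2 ≤ I.card → h I ∈ I) (hacyc : ∀ v, ¬ TransGen (BArc B h) v v) :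
    Relator.LeftUnique (BCover B h) := by
  intro y y' x hy hy'
  obtain ⟨I, hI, hIc, rfl, hxI, -⟩ := hy.bArc
  obtain ⟨J, hJ, hJc, rfl, hxJ, -⟩ := hy'.bArc
  rcases heads_comparable_of_mem_inter hclosed hhead hacyc hI hIc hJ hJc hxI hxJ
    with heq | harc | harc
  · exact heq
  · exact absurd ⟨h J, .single harc, hy'.1⟩ hy.2
  · exact absurd ⟨h I, .single harc, hy.1⟩ hy'.2

theorem BCover.wellFounded_flip (hacyc : ∀ v, ¬ TransGen (BArc B h) v v) :
    WellFounded (flip (BCover B h)) := by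
  have : IsTrans (Fin n) (flip (TransGen (BArc B h))) := ⟨fun _ _ _ hab hbc => hbc.trans hab⟩
  have : Std.Irrefl (flip (TransGen (BArc B h))) := ⟨hacyc⟩
  exact Subrelation.wf (fun hc => hc.1)
    (Finite.wellFounded_of_trans_of_irrefl (flip (TransGen (BArc B h))))

end

theorem stmt6_general (n : ℕ) (B : Finset (Finset (Fin n)))
    (hclosed : ∀ I ∈ B, ∀ J ∈ B, (I ∩ J).Nonempty → I ∪ J ∈ B)
    (h : Finset (Fin n) → Fin n)
    (hhead : ∀ I ∈ B, 2 ≤ I.card → h I ∈ I)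
    (hacyc : ∀ v : Fin n, ¬ Relation.TransGen (BArc B h) v v) :
    (∀ x y y' : Fin n, BCover B h y x → BCover B h y' x → y = y') ∧
      (SimpleGraph.fromRel (BCover B h)).IsAcyclic := by
  have hunique := BCover.leftUnique hclosed hhead hacyc
  exact ⟨fun _ _ _ hy hy' => hunique hy hy',
    SimpleGraph.isAcyclic_fromRel_of_leftUnique (BCover.wellFounded_flip hacyc) hunique⟩

/-- If `G` is the hypergraph of a building set, then for every acyclic
orientation with singleton heads, every vertex of the Hasse diagram of `G/O`
has in-degree at most `1`; consequently the Hasse diagram is a forest. -/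
theorem stmt6 (n : ℕ) (B : Finset (Finset (Fin n)))
    (hne : ∀ I ∈ B, I.Nonempty)
    (hclosed : ∀ I ∈ B, ∀ J ∈ B, (I ∩ J).Nonempty → I ∪ J ∈ B)
    (hsing : ∀ i : Fin n, {i} ∈ B)
    (h : Finset (Fin n) → Fin n)
    (hhead : ∀ I ∈ B, 2 ≤ I.card → h I ∈ I)
    (hacyc : ∀ v : Fin n, ¬ Relation.TransGen (BArc B h) v v) :
    (∀ x y y' : Fin n, BCover B h y x → BCover B h y' x → y = y') ∧
      (SimpleGraph.fromRel (BCover B h)).IsAcyclic :=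
  stmt6_general n B hclosed h hhead hacyc
end

section
/- Fix a building set hypergraph G and an acyclic orientation of G with singleton heads. If there is a directed path from b to d and also a directed path from c to d in the oriented graph G/O (with b ≠ c), then there is a directed path from b to c or from c to b. -/
/-- Paths with an explicit length. -/
inductive PN {n : ℕ} (r : Fin n → Fin n → Prop) : ℕ → Fin n → Fin n → Prop
  | refl (a) : PN r 0 a a
  | tail {k a b c} : PN r k a b → r b c → PN r (k + 1) a c

lemma pn_zero {n : ℕ} {r : Fin n → Fin n → Prop} {a b : Fin n}
    (hp : PN r 0 a b) : a = b := by
  cases hp; rfl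

lemma pn_to_tg {n : ℕ} {r : Fin n → Fin n → Prop} {k : ℕ} {a b : Fin n}
    (hp : PN r (k + 1) a b) : Relation.TransGen r a b := by
  induction k generalizing b with
  | zero =>
    cases hp with
    | tail hp' hr => cases pn_zero hp'; exact Relation.TransGen.single hr
  | succ k ih =>
    cases hp with
    | tail hp' hr => exact (ih hp').tail hr

lemma tg_to_pn {n : ℕ} {r : Fin n → Fin n → Prop} {a b : Fin n}
    (ht : Relation.TransGen r a b) : ∃ k, PN r (k + 1) a b := by
  induction ht with
  | single hr => exact ⟨0, (PN.refl a).tail hr⟩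
  | tail _ hr ih => obtain ⟨k, hp⟩ := ih; exact ⟨k + 1, hp.tail hr⟩

/-- Key local lemma: two arcs into the same vertex have comparable heads. -/
lemma arc_compare {n : ℕ} {B : Finset (Finset (Fin n))}
    (hclosed : ∀ I ∈ B, ∀ J ∈ B, (I ∩ J).Nonempty → I ∪ J ∈ B)
    {h : Finset (Fin n) → Fin n}
    (hhead : ∀ I ∈ B, 2 ≤ I.card → h I ∈ I)
    (hacyc : ∀ v : Fin n, ¬ Relation.TransGen (BArc B h) v v)
    {x z d : Fin n} (hxz : x ≠ z)
    (hx : BArc B h x d) (hz : BArc B h z d) :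
    BArc B h x z ∨ BArc B h z x := by
  obtain ⟨I, hI, hIc, hIh, hdI, hdx⟩ := hx
  obtain ⟨J, hJ, hJc, hJh, hdJ, hdz⟩ := hz
  have hK : I ∪ J ∈ B := hclosed I hI J hJ ⟨d, Finset.mem_inter.2 ⟨hdI, hdJ⟩⟩
  have hKc : 2 ≤ (I ∪ J).card := le_trans hIc (Finset.card_le_card Finset.subset_union_left)
  have hxI : x ∈ I := hIh ▸ hhead I hI hIc
  have hzJ : z ∈ J := hJh ▸ hhead J hJ hJc
  have hwK : h (I ∪ J) ∈ I ∪ J := hhead _ hK hKc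
  set w := h (I ∪ J) with hw
  by_cases hwx : w = x
  · exact Or.inl ⟨I ∪ J, hK, hKc, hwx.symm ▸ rfl, Finset.mem_union_right _ hzJ, hxz.symm⟩
  by_cases hwz : w = z
  · exact Or.inr ⟨I ∪ J, hK, hKc, hwz.symm ▸ rfl, Finset.mem_union_left _ hxI, hxz⟩
  -- otherwise derive a 2-cycle
  exfalso
  rcases Finset.mem_union.1 hwK with hwI | hwJ
  · have a1 : BArc B h x w := ⟨I, hI, hIc, hIh, hwI, hwx⟩
    have a2 : BArc B h w x := ⟨I ∪ J, hK, hKc, rfl, Finset.mem_union_left _ hxI,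
      fun hh => hwx hh.symm⟩
    exact hacyc x ((Relation.TransGen.single a1).tail a2)
  · have a1 : BArc B h z w := ⟨J, hJ, hJc, hJh, hwJ, hwz⟩
    have a2 : BArc B h w z := ⟨I ∪ J, hK, hKc, rfl, Finset.mem_union_right _ hzJ,
      fun hh => hwz hh.symm⟩
    exact hacyc z ((Relation.TransGen.single a1).tail a2)

lemma main_lemma {n : ℕ} {B : Finset (Finset (Fin n))}
    (hclosed : ∀ I ∈ B, ∀ J ∈ B, (I ∩ J).Nonempty → I ∪ J ∈ B)
    {h : Finset (Fin n) → Fin n}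
    (hhead : ∀ I ∈ B, 2 ≤ I.card → h I ∈ I)
    (hacyc : ∀ v : Fin n, ¬ Relation.TransGen (BArc B h) v v) :
    ∀ tot m k (b c d : Fin n), m + k = tot → b ≠ c →
      PN (BArc B h) (m + 1) b d → PN (BArc B h) (k + 1) c d →
      Relation.TransGen (BArc B h) b c ∨ Relation.TransGen (BArc B h) c b := by
  intro tot
  induction tot using Nat.strong_induction_on with
  | _ tot ih =>
  intro m k b c d hmk hbc hpb hpc
  obtain ⟨x, hpbx, hxd⟩ : ∃ x, PN (BArc B h) m b x ∧ BArc B h x d := by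
    cases hpb with | tail hp hr => exact ⟨_, hp, hr⟩
  obtain ⟨z, hpcz, hzd⟩ : ∃ z, PN (BArc B h) k c z ∧ BArc B h z d := by
    cases hpc with | tail hp hr => exact ⟨_, hp, hr⟩
  by_cases hxzeq : x = z
  · subst hxzeq
    by_cases hxc : x = c
    · subst hxc
      cases m with
      | zero => exact absurd (pn_zero hpbx) hbc
      | succ m' => exact Or.inl (pn_to_tg hpbx)
    by_cases hxb : x = b
    · subst hxb
      cases k with
      | zero => exact absurd (pn_zero hpcz).symm hbc
      | succ k' => exact Or.inr (pn_to_tg hpcz)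
    · cases m with
      | zero => exact absurd (pn_zero hpbx).symm hxb
      | succ m' =>
        cases k with
        | zero => exact absurd (pn_zero hpcz).symm hxc
        | succ k' =>
          exact ih (m' + k') (by omega) m' k' b c x (by rfl) hbc hpbx hpcz
  · rcases arc_compare hclosed hhead hacyc hxzeq hxd hzd with haxz | hazx
    · -- b ⇒ x → z, c ⇒ z
      by_cases hzb : z = b
      · subst hzb
        cases k with
        | zero => exact absurd (pn_zero hpcz).symm hbc
        | succ k' => exact Or.inr (pn_to_tg hpcz)
      by_cases hzc : z = c
      · subst hzc
        exact Or.inl (pn_to_tg (hpbx.tail haxz))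
      · cases k with
        | zero => exact absurd (pn_zero hpcz).symm hzc
        | succ k' =>
          exact ih (m + k') (by omega) m k' b c z rfl hbc (hpbx.tail haxz) hpcz
    · -- c ⇒ z → x, b ⇒ x
      by_cases hxc : x = c
      · subst hxc
        cases m with
        | zero => exact absurd (pn_zero hpbx) hbc
        | succ m' => exact Or.inl (pn_to_tg hpbx)
      by_cases hxb : x = b
      · subst hxb
        exact Or.inr (pn_to_tg (hpcz.tail hazx))
      · cases m with
        | zero => exact absurd (pn_zero hpbx).symm hxb
        | succ m' =>
          exact ih (k + m') (by omega) k m' c b x rfl hbc.symm (hpcz.tail hazx) hpbx |>.symm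

/-- For a building set hypergraph with an acyclic singleton-head orientation:
if there are directed paths from `b` to `d` and from `c` to `d` in `G/O`
(with `b, c, d` distinct), then there is a directed path from `b` to `c` or
from `c` to `b`. -/
theorem stmt7 (n : ℕ) (B : Finset (Finset (Fin n)))
    (hne : ∀ I ∈ B, I.Nonempty)
    (hclosed : ∀ I ∈ B, ∀ J ∈ B, (I ∩ J).Nonempty → I ∪ J ∈ B)
    (hsing : ∀ i : Fin n, {i} ∈ B)
    (h : Finset (Fin n) → Fin n)
    (hhead : ∀ I ∈ B, 2 ≤ I.card → h I ∈ I)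
    (hacyc : ∀ v : Fin n, ¬ Relation.TransGen (BArc B h) v v)
    (b c d : Fin n) (hbc : b ≠ c) (hbd : b ≠ d) (hcd : c ≠ d)
    (hb : Relation.TransGen (BArc B h) b d)
    (hc : Relation.TransGen (BArc B h) c d) :
    Relation.TransGen (BArc B h) b c ∨ Relation.TransGen (BArc B h) c b := by
  obtain ⟨m, hpb⟩ := tg_to_pn hb
  obtain ⟨k, hpc⟩ := tg_to_pn hc
  exact main_lemma hclosed hhead hacyc (m + k) m k b c d rfl hbc hpb hpc
end

section
/- Let A = {a_1 < a_2 < ⋯ < a_k} be a set of integers with a_1 ≥ 2, n = a_k. The map sending a sequence (e_1,...,e_{n−1}) of elements of {[a_1],...,[a_k]} (intervals [a_i] = {1,...,a_i}) to the sequence (n−|e_1|,...,n−|e_{n−1}|) is a bijection between the sequences satisfying |e_{i_1} ∪ ⋯ ∪ e_{i_r}| ≥ r+1 for all distinct indices i_1,...,i_r, and parking functions of length n−1 with entries in the set {n − a : a ∈ A}. -/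
/-- `c` is a parking function of length `m`: the increasing rearrangement
`d_1 ≤ ⋯ ≤ d_m` satisfies `d_i ≤ i-1`, equivalently for every `t < m` at
least `t+1` entries are `≤ t`. -/
def IsParkingFn {m : ℕ} (c : Fin m → ℕ) : Prop :=
  ∀ t : ℕ, t < m → t + 1 ≤ (Finset.univ.filter (fun j => c j ≤ t)).card

/-- Let `A = {a_1 < ⋯ < a_k}` with `a_1 ≥ 2` and `n = a_k`, and consider the
hyperedges `[a_i] = {1,…,a_i}`. The map
`(e_1,…,e_{n-1}) ↦ (n-|e_1|,…,n-|e_{n-1}|)` is a bijection between the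
sequences of hyperedges with `|e_{i_1} ∪ ⋯ ∪ e_{i_r}| ≥ r+1` for all distinct
indices, and parking functions of length `n-1` with entries in
`{n - a : a ∈ A}`. -/
theorem stmt12 (k : ℕ) (hk : 0 < k) (n : ℕ) (a : Fin k → ℕ)
    (hmono : StrictMono a) (h2 : 2 ≤ a ⟨0, hk⟩)
    (hn : a ⟨k - 1, by omega⟩ = n) :
    Set.BijOn
      (fun (e : Fin (n - 1) → Fin k) (i : Fin (n - 1)) => n - a (e i))
      {e : Fin (n - 1) → Fin k |
        ∀ I : Finset (Fin (n - 1)), I.Nonempty →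
          I.card + 1 ≤ (I.biUnion (fun i => Finset.Icc 1 (a (e i)))).card}
      {c : Fin (n - 1) → ℕ |
        IsParkingFn c ∧ ∀ i, ∃ j : Fin k, c i = n - a j} := by
  have hale : ∀ j : Fin k, a j ≤ n := by
    intro j
    rw [← hn]
    exact hmono.monotone (by rw [Fin.le_def]; simp; omega)
  have ha2 : ∀ j : Fin k, 2 ≤ a j := by
    intro j
    exact h2.trans (hmono.monotone (by rw [Fin.le_def]; simp))
  have hn2 : 2 ≤ n := (ha2 _).trans_eq hn
  -- the union of nested intervals has cardinality equal to the sup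
  have hcard : ∀ (e : Fin (n - 1) → Fin k) (I : Finset (Fin (n - 1))), I.Nonempty →
      (I.biUnion (fun i => Finset.Icc 1 (a (e i)))).card = I.sup (fun i => a (e i)) := by
    intro e I hI
    have heq : I.biUnion (fun i => Finset.Icc 1 (a (e i)))
        = Finset.Icc 1 (I.sup fun i => a (e i)) := by
      ext x
      simp only [Finset.mem_biUnion, Finset.mem_Icc]
      constructor
      · rintro ⟨i, hi, h1, hx⟩
        exact ⟨h1, hx.trans (Finset.le_sup (f := fun i => a (e i)) hi)⟩
      · rintro ⟨h1, hx⟩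
        obtain ⟨i, hi, hieq⟩ := Finset.exists_mem_eq_sup I hI (fun i => a (e i))
        exact ⟨i, hi, h1, hieq ▸ hx⟩
    rw [heq, Nat.card_Icc]; omega
  refine ⟨?_, ?_, ?_⟩
  · -- MapsTo
    intro e he
    refine ⟨?_, fun i => ⟨e i, rfl⟩⟩
    intro t ht
    set S := Finset.univ.filter (fun j => n - a (e j) ≤ t) with hS
    set I := Finset.univ.filter (fun j => ¬ (n - a (e j) ≤ t)) with hI
    have hsum : S.card + I.card = n - 1 := by
      rw [hS, hI, Finset.card_filter_add_card_filter_not]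
      simp
    have hIb : I.card ≤ n - t - 2 := by
      rcases I.eq_empty_or_nonempty with h | h
      · simp [h]
      · have h1 := he I h
        rw [hcard e I h] at h1
        have h2 : I.sup (fun i => a (e i)) ≤ n - t - 1 := by
          apply Finset.sup_le
          intro i hi
          rw [hI, Finset.mem_filter] at hi
          have := hale (e i)
          omega
        omega
    omega
  · -- InjOn
    intro e1 h1 e2 h2 heq
    funext i
    have := congrFun heq i
    simp only at this
    apply hmono.injective
    have g1 := hale (e1 i)
    have g2 := hale (e2 i)
    omega
  · -- SurjOn
    rintro c ⟨hpark, hent⟩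
    choose j hj using hent
    refine ⟨j, ?_, funext fun i => (hj i).symm⟩
    intro I hI
    rw [hcard j I hI]
    set s := I.sup (fun i => a (j i)) with hs
    obtain ⟨i0, hi0, hi0eq⟩ := Finset.exists_mem_eq_sup I hI (fun i => a (j i))
    have hs2 : 2 ≤ s := by rw [hs, hi0eq]; exact ha2 _
    have hsn : s ≤ n := by rw [hs, hi0eq]; exact hale _
    rcases eq_or_lt_of_le hsn with h | h
    · have : I.card ≤ n - 1 := by
        have := Finset.card_le_card (Finset.subset_univ I)
        simpa using this
      omega
    · -- s < n
      have ht : n - s - 1 < n - 1 := by omega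
      have hp := hpark (n - s - 1) ht
      have hsub : Finset.univ.filter (fun x => c x ≤ n - s - 1) ⊆ Iᶜ := by
        intro x hx
        rw [Finset.mem_filter] at hx
        rw [Finset.mem_compl]
        intro hxI
        have : a (j x) ≤ s := hs ▸ Finset.le_sup (f := fun i => a (j i)) hxI
        have := hale (j x)
        have := hj x
        omega
      have hcardle := Finset.card_le_card hsub
      rw [Finset.card_compl] at hcardle
      simp only [Fintype.card_fin] at hcardle
      omega
end

section
/- For a chain hypergraph G = {[a_1], [a_2], ..., [a_k]} with 2 ≤ a_1 < a_2 < ⋯ < a_k = n (where [a] = {1,...,a}), the acyclic orientations of G with singleton heads (no vertices identified) are in bijection with sequences (S_1,...,S_k) of nonempty sets with S_i ⊆ ([a_i] \ [a_{i−1}]) ∪ {*} satisfying the compatibility rules from nested sources; in particular their number is Π_{i=1}^k (a_i − a_{i−1} + 1) where a_0 = 1. -/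
/-- Build a head sequence from a choice sequence `c`:
`B i = a i + c i` if `c i` is a "new" choice, else repeat previous head (0 at start). -/
def stmt14B (a c : ℕ → ℕ) : ℕ → ℕ
  | 0 => if c 0 < a 1 - a 0 then a 0 + c 0 else 0
  | (i+1) => if c (i+1) < a (i+2) - a (i+1) then a (i+1) + c (i+1) else stmt14B a c i

lemma stmt14_amono (k : ℕ) (a : ℕ → ℕ) (hmono : ∀ i < k, a i < a (i + 1)) :
    ∀ i j, i ≤ j → j ≤ k → a i ≤ a j := by
  intro i j hij hjk
  induction j with
  | zero => have : i = 0 := by omega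
            simp [this]
  | succ m ih =>
      rcases Nat.eq_or_lt_of_le hij with h | h
      · simp [h]
      · exact le_trans (ih (by omega) (by omega)) (le_of_lt (hmono m (by omega)))

lemma stmt14B_lt (k : ℕ) (a c : ℕ → ℕ) (ha0 : a 0 = 1)
    (hmono : ∀ i < k, a i < a (i + 1)) :
    ∀ i < k, stmt14B a c i < a (i + 1) := by
  intro i
  induction i with
  | zero =>
      intro h0
      have h1 : a 0 < a 1 := hmono 0 h0
      show stmt14B a c 0 < a 1
      simp only [stmt14B]
      split <;> omega
  | succ m ih =>
      intro hm
      have h1 : a (m + 1) < a (m + 2) := hmono (m + 1) hm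
      have h2 : stmt14B a c m < a (m + 1) := ih (by omega)
      show stmt14B a c (m + 1) < a (m + 2)
      simp only [stmt14B]
      split <;> omega

lemma stmt14B_new (a c : ℕ → ℕ) (i : ℕ) (h : c i < a (i + 1) - a i) :
    stmt14B a c i = a i + c i := by
  cases i <;> simp [stmt14B, h]

lemma stmt14B_old (k : ℕ) (a c : ℕ → ℕ) (ha0 : a 0 = 1)
    (hmono : ∀ i < k, a i < a (i + 1)) :
    ∀ i < k, ¬ c i < a (i + 1) - a i → stmt14B a c i < a i := by
  intro i hik hci
  cases i with
  | zero =>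
      have hci' : ¬ c 0 < a 1 - a 0 := hci
      show stmt14B a c 0 < a 0
      rw [show stmt14B a c 0 = if c 0 < a 1 - a 0 then a 0 + c 0 else 0 from rfl,
        if_neg hci']
      omega
  | succ m =>
      simp only [stmt14B, if_neg hci]
      exact stmt14B_lt k a c ha0 hmono m (by omega)

lemma stmt14B_global (k : ℕ) (a c : ℕ → ℕ) (ha0 : a 0 = 1)
    (hmono : ∀ i < k, a i < a (i + 1)) :
    ∀ j < k, ∀ i ≤ j, stmt14B a c j < a (i + 1) → stmt14B a c i = stmt14B a c j := by
  intro j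
  induction j with
  | zero => intro _ i hi _
            have : i = 0 := by omega
            simp [this]
  | succ m ih =>
      intro hmk i him hlt
      rcases Nat.eq_or_lt_of_le him with h | h
      · simp [h]
      · have hi_m : i ≤ m := by omega
        by_cases hc : c (m + 1) < a (m + 2) - a (m + 1)
        · exfalso
          have hB := stmt14B_new a c (m + 1) hc
          have : a (i + 1) ≤ a (m + 1) :=
            stmt14_amono k a hmono (i + 1) (m + 1) (by omega) (by omega)
          omega
        · have hB : stmt14B a c (m + 1) = stmt14B a c m := by
            simp [stmt14B, hc]
          rw [hB] at hlt ⊢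
          exact ih (by omega) i hi_m hlt

lemma stmt14B_roundtrip (k : ℕ) (a c : ℕ → ℕ) (ha0 : a 0 = 1)
    (hmono : ∀ i < k, a i < a (i + 1)) :
    ∀ i < k, c i < a (i + 1) - a i + 1 →
      (if a i ≤ stmt14B a c i then stmt14B a c i - a i else a (i + 1) - a i) = c i := by
  intro i hik hci
  by_cases hc : c i < a (i + 1) - a i
  · rw [stmt14B_new a c i hc]
    simp
  · have h1 := stmt14B_old k a c ha0 hmono i hik hc
    rw [if_neg (by omega)]
    omega

/-- The forward map: read off the choice made at each step. -/
def stmt14F (k n : ℕ) (a : ℕ → ℕ)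
    (h : {h : Fin k → Fin n // (∀ i : Fin k, (h i : ℕ) < a (i.val + 1)) ∧
        ∀ i j : Fin k, (i : ℕ) ≤ (j : ℕ) → ((h j : ℕ) < a ((i : ℕ) + 1)) → h i = h j}) :
    ∀ i : Fin k, Fin (a (i.val + 1) - a i.val + 1) :=
  fun i => ⟨if a i.val ≤ (h.1 i : ℕ) then (h.1 i : ℕ) - a i.val
      else a (i.val + 1) - a i.val,
    by have := h.2.1 i; split <;> omega⟩


/-- For the chain hypergraph `G = {[a_1],…,[a_k]}` on `[n]` (with
`1 = a_0 < a_1 < ⋯ < a_k = n`, `a_1 ≥ 2`, vertices of `[a]` being the `a`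
smallest elements of `Fin n`), the number of acyclic orientations with
singleton heads equals `Π_{i=1}^k (a_i − a_{i−1} + 1)`. -/
theorem stmt14 (k n : ℕ) (hk : 0 < k) (a : ℕ → ℕ) (ha0 : a 0 = 1)
    (hmono : ∀ i < k, a i < a (i + 1)) (h2 : 2 ≤ a 1) (han : a k = n) :
    {h : Fin k → Fin n |
      (∀ i : Fin k, (h i : ℕ) < a (i.val + 1)) ∧
      (∀ v : Fin n, ¬ Relation.TransGen
        (fun x y => ∃ i : Fin k,
          h i = x ∧ (y : ℕ) < a (i.val + 1) ∧ y ≠ x) v v)}.ncard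
      = ∏ i ∈ Finset.range k, (a (i + 1) - a i + 1) := by
  classical
  have amono := stmt14_amono k a hmono
  -- Step 1: acyclicity is equivalent to the "no 2-cycle" condition
  have hset : {h : Fin k → Fin n |
      (∀ i : Fin k, (h i : ℕ) < a (i.val + 1)) ∧
      (∀ v : Fin n, ¬ Relation.TransGen
        (fun x y => ∃ i : Fin k,
          h i = x ∧ (y : ℕ) < a (i.val + 1) ∧ y ≠ x) v v)} =
      {h : Fin k → Fin n | (∀ i : Fin k, (h i : ℕ) < a (i.val + 1)) ∧
        ∀ i j : Fin k, (i : ℕ) ≤ (j : ℕ) → ((h j : ℕ) < a ((i : ℕ) + 1)) → h i = h j} := by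
    ext h
    simp only [Set.mem_setOf_eq]
    constructor
    · rintro ⟨hb, hac⟩
      refine ⟨hb, ?_⟩
      intro i j hij hlt
      by_contra hne
      apply hac (h i)
      have harc1 : (fun x y : Fin n => ∃ i : Fin k,
          h i = x ∧ (y : ℕ) < a (i.val + 1) ∧ y ≠ x) (h i) (h j) :=
        ⟨i, rfl, hlt, fun e => hne e.symm⟩
      have hlt2 : (h i : ℕ) < a ((j : ℕ) + 1) :=
        lt_of_lt_of_le (hb i) (amono ((i : ℕ) + 1) ((j : ℕ) + 1) (by omega)
          (by have := j.isLt; omega))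
      have harc2 : (fun x y : Fin n => ∃ i : Fin k,
          h i = x ∧ (y : ℕ) < a (i.val + 1) ∧ y ≠ x) (h j) (h i) :=
        ⟨j, rfl, hlt2, hne⟩
      exact (Relation.TransGen.single harc1).tail harc2
    · rintro ⟨hb, hglob⟩
      refine ⟨hb, ?_⟩
      intro v hT
      have step1 : ∀ x y : Fin n, (∃ i : Fin k,
            h i = x ∧ (y : ℕ) < a (i.val + 1) ∧ y ≠ x) →
          ∃ i : Fin k, h i = x ∧ ∀ j : Fin k, h j = y → (j : ℕ) < (i : ℕ) := by
        rintro x y ⟨i, hix, hylt, hyx⟩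
        refine ⟨i, hix, ?_⟩
        intro j hjy
        by_contra hji
        have hij : (i : ℕ) ≤ (j : ℕ) := by omega
        have heq := hglob i j hij (by rw [hjy]; exact hylt)
        exact hyx (by rw [← hjy, ← heq]; exact hix)
      have key : ∀ x y : Fin n, Relation.TransGen (fun x y : Fin n => ∃ i : Fin k,
            h i = x ∧ (y : ℕ) < a (i.val + 1) ∧ y ≠ x) x y →
          ∃ i : Fin k, h i = x ∧ ∀ j : Fin k, h j = y → (j : ℕ) < (i : ℕ) := by
        intro x y hxy
        induction hxy with
        | single h1 => exact step1 _ _ h1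
        | tail _ h1 ih =>
            obtain ⟨i, hix, hall⟩ := ih
            obtain ⟨i', hi'b, hall'⟩ := step1 _ _ h1
            refine ⟨i, hix, ?_⟩
            intro j hjz
            exact lt_trans (hall' j hjz) (hall i' hi'b)
      obtain ⟨i, hiv, hall⟩ := key v v hT
      exact absurd (hall i hiv) (lt_irrefl _)
  rw [hset]
  -- Step 2: count the no-2-cycle set via a bijection with a product of intervals
  have hFinj : Function.Injective (stmt14F k n a) := by
    rintro ⟨h, hb, hg⟩ ⟨h', hb', hg'⟩ heq
    have main : ∀ i : Fin k, (∀ j : Fin k, (j : ℕ) < (i : ℕ) → h j = h' j) → h i = h' i := by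
      intro i hprev
      have hv : (if a i.val ≤ (h i : ℕ) then (h i : ℕ) - a i.val
            else a (i.val + 1) - a i.val)
          = (if a i.val ≤ (h' i : ℕ) then (h' i : ℕ) - a i.val
            else a (i.val + 1) - a i.val) :=
        congrArg Fin.val (congrFun heq i)
      have hbi := hb i
      have hbi' := hb' i
      have hai : a (i : ℕ) < a ((i : ℕ) + 1) := hmono _ i.isLt
      by_cases c1 : a i.val ≤ (h i : ℕ) <;> by_cases c2 : a i.val ≤ (h' i : ℕ)
      · rw [if_pos c1, if_pos c2] at hv
        exact Fin.ext (by omega)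
      · rw [if_pos c1, if_neg c2] at hv
        exact absurd hv (by omega)
      · rw [if_neg c1, if_pos c2] at hv
        exact absurd hv (by omega)
      · rcases Nat.eq_zero_or_pos (i : ℕ) with h0 | hpos
        · have e1 : a (i : ℕ) = 1 := by rw [h0, ha0]
          exact Fin.ext (by omega)
        · have hjk : (i : ℕ) - 1 < k := by have := i.isLt; omega
          set j : Fin k := ⟨(i : ℕ) - 1, hjk⟩ with hj
          have hji : (j : ℕ) + 1 = (i : ℕ) := by
            simp only [hj]
            omega
          have haj : a ((j : ℕ) + 1) = a (i : ℕ) := by rw [hji]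
          have e1 : h j = h i := hg j i (by omega) (by rw [haj]; omega)
          have e2 : h' j = h' i := hg' j i (by omega) (by rw [haj]; omega)
          rw [← e1, ← e2]
          exact hprev j (by omega)
    have key : ∀ N : ℕ, ∀ i : Fin k, (i : ℕ) ≤ N → h i = h' i := by
      intro N
      induction N with
      | zero => exact fun i hi => main i (fun j hj => absurd hj (by omega))
      | succ N ih => exact fun i hi => main i (fun j hj => ih j (by omega))
    exact Subtype.ext (funext fun i => key (i : ℕ) i le_rfl)
  have hFsurj : Function.Surjective (stmt14F k n a) := by
    intro c
    set c' : ℕ → ℕ := fun i => if hi : i < k then (c ⟨i, hi⟩ : ℕ) else 0 with hc'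
    have hltn : ∀ i : Fin k, stmt14B a c' (i : ℕ) < n := by
      intro i
      have h1 := stmt14B_lt k a c' ha0 hmono (i : ℕ) i.isLt
      have h2 : a ((i : ℕ) + 1) ≤ a k :=
        amono ((i : ℕ) + 1) k (by have := i.isLt; omega) le_rfl
      omega
    refine ⟨⟨fun i => ⟨stmt14B a c' (i : ℕ), hltn i⟩, ?_, ?_⟩, ?_⟩
    · intro i
      exact stmt14B_lt k a c' ha0 hmono (i : ℕ) i.isLt
    · intro i j hij hlt2
      exact Fin.ext (stmt14B_global k a c' ha0 hmono (j : ℕ) j.isLt (i : ℕ) hij hlt2)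
    · funext i
      apply Fin.ext
      have hci : c' (i : ℕ) = (c i : ℕ) := by
        rw [hc']
        simp [i.isLt]
      have hrt := stmt14B_roundtrip k a c' ha0 hmono (i : ℕ) i.isLt
        (by rw [hci]; exact (c i).isLt)
      rw [hci] at hrt
      exact hrt
  have hcardT : Nat.card {h : Fin k → Fin n // (∀ i : Fin k, (h i : ℕ) < a (i.val + 1)) ∧
        ∀ i j : Fin k, (i : ℕ) ≤ (j : ℕ) → ((h j : ℕ) < a ((i : ℕ) + 1)) → h i = h j}
      = ∏ i ∈ Finset.range k, (a (i + 1) - a i + 1) := by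
    rw [Nat.card_congr (Equiv.ofBijective _ ⟨hFinj, hFsurj⟩), Nat.card_eq_fintype_card,
      Fintype.card_pi]
    simp only [Fintype.card_fin]
    exact Fin.prod_univ_eq_prod_range (fun i => a (i + 1) - a i + 1) k
  rw [← hcardT, ← Nat.card_coe_set_eq]
  rfl
end

section
/- If G is a hyperforest (a hypergraph with no proper cycles), its hyperedges U_1,...,U_m can be ordered so that |(U_1 ∪ ⋯ ∪ U_i) ∩ U_{i+1}| ≤ 1 for each i. -/
/-!
A nonempty hyperforest has a hyperedge meeting the union of the others in at most one vertex.
Otherwise, start anywhere and keep leaving the current hyperedge through one of its shared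
vertices other than the one by which it was entered. This builds a proper path; a hyperedge
cannot occur twice on it, since a repetition closes a proper cycle, so the path would outgrow
the number of hyperedges. Putting such a hyperedge last and ordering the rest recursively
gives the ordering.
-/

/-- A hypergraph `G` (each hyperedge of size at least 2) contains a proper
cycle: a sequence of vertices `v_0, v_1, …, v_ℓ` with `v_0 = v_ℓ`, `ℓ ≥ 1`,
pairwise distinct hyperedges `U_1, …, U_ℓ` with `v_{i-1} ≠ v_i` and
`{v_{i-1}, v_i} ⊆ U_i` for each `i`. -/
def HasProperCycle {V : Type*} [DecidableEq V] (G : Finset (Finset V)) : Prop :=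
  ∃ (ℓ : ℕ), 1 ≤ ℓ ∧ ∃ (v : Fin (ℓ + 1) → V) (U : Fin ℓ → Finset V),
    Function.Injective U ∧ (∀ i, U i ∈ G) ∧
    (∀ i : Fin ℓ, v i.castSucc ≠ v i.succ ∧
      v i.castSucc ∈ U i ∧ v i.succ ∈ U i) ∧
    v 0 = v (Fin.last ℓ)

section

variable {V : Type*}

def sharedVertices [DecidableEq V] (G : Finset (Finset V)) (U : Finset V) : Finset V :=
  (G.erase U).biUnion id ∩ U

lemma mem_sharedVertices [DecidableEq V] {G : Finset (Finset V)} {U : Finset V} {x : V} :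
    x ∈ sharedVertices G U ↔ x ∈ U ∧ ∃ W ∈ G, W ≠ U ∧ x ∈ W := by
  simp only [sharedVertices, Finset.mem_inter, Finset.mem_biUnion, Finset.mem_erase, id]
  aesop

/-- `w 0, E 0, w 1, …, E (n - 1), w n` is a proper path in `G`; the other values of `w` and `E`
play no role. -/
structure IsProperPath (G : Finset (Finset V)) (n : ℕ) (w : ℕ → V) (E : ℕ → Finset V) :
    Prop where
  mem : ∀ i < n, E i ∈ G
  injOn : Set.InjOn E (Set.Iio n)
  ne : ∀ i < n, w i ≠ w (i + 1)
  left_mem : ∀ i < n, w i ∈ E i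
  right_mem : ∀ i < n, w (i + 1) ∈ E i

namespace IsProperPath

variable {G : Finset (Finset V)} {n : ℕ} {w : ℕ → V} {E : ℕ → Finset V}

lemma zero (G : Finset (Finset V)) (w : ℕ → V) (E : ℕ → Finset V) : IsProperPath G 0 w E where
  mem _ h := absurd h (Nat.not_lt_zero _)
  injOn _ h := absurd h (Nat.not_lt_zero _)
  ne _ h := absurd h (Nat.not_lt_zero _)
  left_mem _ h := absurd h (Nat.not_lt_zero _)
  right_mem _ h := absurd h (Nat.not_lt_zero _)

lemma card_le (h : IsProperPath G n w E) : n ≤ G.card := by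
  simpa using Finset.card_le_card_of_injOn E (s := Finset.range n)
    (fun i hi => h.mem i (Finset.mem_range.mp hi)) (by simpa using h.injOn)

lemma drop (h : IsProperPath G n w E) (j : ℕ) :
    IsProperPath G (n - j) (fun i => w (j + i)) (fun i => E (j + i)) where
  mem i hi := h.mem _ (by omega)
  injOn i hi i' hi' he := by
    simp only [Set.mem_Iio] at hi hi'
    have := h.injOn (show j + i < n by omega) (show j + i' < n by omega) he
    omega
  ne i hi := h.ne _ (by omega)
  left_mem i hi := h.left_mem _ (by omega)
  right_mem i hi := h.right_mem _ (by omega)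

lemma snoc (h : IsProperPath G n w E) {W : Finset V} {b : V} (hW : W ∈ G)
    (hWE : ∀ i < n, E i ≠ W) (hw : w n ∈ W) (hb : b ∈ W) (hne : w n ≠ b) :
    IsProperPath G (n + 1) (fun i => if i ≤ n then w i else b)
      (fun i => if i < n then E i else W) where
  mem i hi := by
    split_ifs with hin
    exacts [h.mem i hin, hW]
  injOn i hi i' hi' he := by
    simp only [Set.mem_Iio] at hi hi' he
    split_ifs at he with hin hin' hin'
    · exact h.injOn hin hin' he
    · exact absurd he (hWE i hin)
    · exact absurd he.symm (hWE i' hin')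
    · omega
  ne i hi := by
    by_cases hin : i < n
    · simpa [hin.le, Nat.succ_le_of_lt hin] using h.ne i hin
    · simpa [show i = n by omega] using hne
  left_mem i hi := by
    by_cases hin : i < n
    · simpa [hin, hin.le] using h.left_mem i hin
    · simpa [show i = n by omega] using hw
  right_mem i hi := by
    by_cases hin : i < n
    · simpa [hin, Nat.succ_le_of_lt hin] using h.right_mem i hin
    · simpa [show i = n by omega] using hb

lemma hasProperCycle [DecidableEq V] (h : IsProperPath G n w E) (hn : 1 ≤ n)
    (hclosed : w 0 = w n) : HasProperCycle G := by
  refine ⟨n, hn, fun i => w i, fun i => E i, fun i j he => Fin.ext (h.injOn i.2 j.2 he),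
    fun i => h.mem i i.2, fun i => ⟨h.ne i i.2, h.left_mem i i.2, h.right_mem i i.2⟩, hclosed⟩

lemma hasProperCycle_of_mem [DecidableEq V] (h : IsProperPath G n w E) (hn : 1 ≤ n)
    {W : Finset V} (hW : W ∈ G) (hWE : ∀ i < n, E i ≠ W) (hw0 : w 0 ∈ W) (hwn : w n ∈ W) :
    HasProperCycle G := by
  by_cases hclosed : w 0 = w n
  · exact h.hasProperCycle hn hclosed
  · exact (h.snoc hW hWE hwn hw0 (Ne.symm hclosed)).hasProperCycle (by omega) (by simp)

end IsProperPath

lemma HasProperCycle.mono [DecidableEq V] {G G' : Finset (Finset V)} (hGG' : G ⊆ G')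
    (h : HasProperCycle G) : HasProperCycle G' := by
  obtain ⟨ℓ, hℓ, v, U, hU, hUG, hstep, hclosed⟩ := h
  exact ⟨ℓ, hℓ, v, U, hU, fun i => hGG' (hUG i), hstep, hclosed⟩

section Leaf

variable [DecidableEq V] {G : Finset (Finset V)}

lemma exists_longer_path (hforest : ¬ HasProperCycle G)
    (hG : ∀ U ∈ G, 1 < (sharedVertices G U).card) {n : ℕ} {w : ℕ → V} {E : ℕ → Finset V}
    (h : IsProperPath G (n + 1) w E) (hw : w (n + 1) ∈ sharedVertices G (E n)) :
    ∃ w' E', IsProperPath G (n + 2) w' E' ∧ w' (n + 2) ∈ sharedVertices G (E' (n + 1)) := by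
  obtain ⟨-, W, hW, hWE, hwW⟩ := mem_sharedVertices.mp hw
  by_cases hnew : ∀ i < n + 1, E i ≠ W
  · obtain ⟨b, hb, hbw⟩ := Finset.exists_mem_ne (hG W hW) (w (n + 1))
    exact ⟨_, _, h.snoc hW hnew hwW (mem_sharedVertices.mp hb).1 hbw.symm, by simpa using hb⟩
  · push Not at hnew
    obtain ⟨j, hj, rfl⟩ := hnew
    have hjn : j < n := lt_of_le_of_ne (Nat.lt_succ_iff.mp hj) (by rintro rfl; exact hWE rfl)
    refine absurd ((h.drop (j + 1)).hasProperCycle_of_mem (by omega) hW ?_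
      (h.right_mem j hj) ?_) hforest
    · intro i hi he
      have := h.injOn (show j + 1 + i < n + 1 by omega) hj he
      omega
    · rwa [show j + 1 + (n + 1 - (j + 1)) = n + 1 by omega]

lemma exists_card_sharedVertices_le_one (hne : G.Nonempty) (hforest : ¬ HasProperCycle G) :
    ∃ U ∈ G, (sharedVertices G U).card ≤ 1 := by
  by_contra! hG
  have hpath : ∀ n, ∃ w E, IsProperPath G (n + 1) w E ∧ w (n + 1) ∈ sharedVertices G (E n) := by
    intro n
    induction n with
    | zero =>
      obtain ⟨U, hU⟩ := hne
      obtain ⟨x, hx⟩ := Finset.card_pos.mp (zero_lt_one.trans (hG U hU))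
      obtain ⟨b, hb, hbx⟩ := Finset.exists_mem_ne (hG U hU) x
      exact ⟨_, _, (IsProperPath.zero G (fun _ => x) (fun _ => U)).snoc hU (by simp)
        (mem_sharedVertices.mp hx).1 (mem_sharedVertices.mp hb).1 hbx.symm, by simpa using hb⟩
    | succ n ih =>
      obtain ⟨w, E, h, hw⟩ := ih
      exact exists_longer_path hforest hG h hw
  obtain ⟨w, E, h, -⟩ := hpath G.card
  exact absurd h.card_le (by omega)

end Leaf

lemma exists_injective_ordering [DecidableEq V] (n : ℕ) :
    ∀ G : Finset (Finset V), G.card = n → ¬ HasProperCycle G →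
      ∃ f : Fin n → Finset V, Function.Injective f ∧ (∀ i, f i ∈ G) ∧
        ∀ i, ((Finset.Iio i).biUnion f ∩ f i).card ≤ 1 := by
  induction n with
  | zero => exact fun _ _ _ => ⟨Fin.elim0, fun i => i.elim0, fun i => i.elim0, fun i => i.elim0⟩
  | succ n ih =>
    intro G hcard hforest
    obtain ⟨U, hU, hleaf⟩ :=
      exists_card_sharedVertices_le_one (Finset.card_pos.mp (by omega)) hforest
    obtain ⟨f, hinj, hmem, hord⟩ := ih (G.erase U) (by simp [Finset.card_erase_of_mem hU, hcard])
      fun h => hforest (h.mono (Finset.erase_subset U G))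
    refine ⟨Fin.snoc f U, Fin.snoc_injective_of_injective hinj ?_, Fin.lastCases ?_ fun i => ?_,
      Fin.lastCases ?_ fun i => ?_⟩
    · rintro ⟨i, hi⟩
      exact (Finset.mem_erase.mp (hmem i)).1 hi
    · simpa using hU
    · simpa using Finset.mem_of_mem_erase (hmem i)
    · refine le_trans (Finset.card_le_card ?_) hleaf
      rw [Fin.Iio_last_eq_map, Finset.map_eq_image, Finset.image_biUnion]
      simp only [Fin.coe_castSuccEmb, Fin.snoc_castSucc, Fin.snoc_last]
      exact Finset.inter_subset_inter
        (Finset.biUnion_subset.mpr fun i _ => Finset.subset_biUnion_of_mem id (hmem i)) le_rfl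
    · rw [Fin.Iio_castSucc, Finset.map_eq_image, Finset.image_biUnion]
      simp only [Fin.coe_castSuccEmb, Fin.snoc_castSucc]
      exact hord i

end

theorem stmt15_general {V : Type*} [DecidableEq V] (G : Finset (Finset V))
    (hforest : ¬ HasProperCycle G) :
    ∃ e : Fin G.card ≃ {U : Finset V // U ∈ G},
      ∀ i : Fin G.card,
        (((Finset.univ.filter (fun j => j < i)).biUnion
            (fun j => (e j).1)) ∩ (e i).1).card ≤ 1 := by
  obtain ⟨f, hinj, hmem, hord⟩ := exists_injective_ordering G.card G rfl hforest
  have hbij : Function.Bijective fun i => (⟨f i, hmem i⟩ : {U : Finset V // U ∈ G}) :=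
    (Fintype.bijective_iff_injective_and_card _).mpr
      ⟨fun i j h => hinj (congrArg Subtype.val h), by simp⟩
  refine ⟨Equiv.ofBijective _ hbij, fun i => ?_⟩
  simpa [Finset.filter_gt_eq_Iio] using hord i

/-- If `G` is a hyperforest (no proper cycles), its hyperedges can be ordered
`U_1, …, U_m` so that `|(U_1 ∪ ⋯ ∪ U_i) ∩ U_{i+1}| ≤ 1` for each `i`. -/
theorem stmt15 {V : Type*} [DecidableEq V] (G : Finset (Finset V))
    (hcard : ∀ U ∈ G, 2 ≤ U.card)
    (hforest : ¬ HasProperCycle G) :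
    ∃ e : Fin G.card ≃ {U : Finset V // U ∈ G},
      ∀ i : Fin G.card,
        (((Finset.univ.filter (fun j => j < i)).biUnion
            (fun j => (e j).1)) ∩ (e i).1).card ≤ 1 :=
  stmt15_general G hforest
end

section
/- The map Ω from set compositions of [n] to acyclic orientations (over all flats) defined by orienting each non-contracted hyperedge U with head U ∩ A_i for the minimal i with A_i ∩ U ≠ ∅ is well-defined: the resulting oriented graph has no directed cycle, and the partition [n]/Ω(A) refines {A_1,...,A_k}. -/
variable {n : ℕ}

/-- Equivalence generated by identifying all vertices within each head; its
classes form the set partition `[n]/O`. -/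
def HeadEqv (G : Finset (Finset (Fin n)))
    (O : Finset (Fin n) → Finset (Fin n) × Finset (Fin n)) :
    Fin n → Fin n → Prop :=
  Relation.EqvGen (fun a b => ∃ U ∈ G, a ∈ (O U).1 ∧ b ∈ (O U).1)

/-- Arc relation of the quotient directed multigraph `G/O`. -/
def OArc (G : Finset (Finset (Fin n)))
    (O : Finset (Fin n) → Finset (Fin n) × Finset (Fin n))
    (a b : Fin n) : Prop :=
  ∃ U ∈ G, ∃ a', HeadEqv G O a a' ∧ a' ∈ (O U).1 ∧ b ∈ (O U).2

/-- `G/O` has no directed cycle. -/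
def AcyclicO (G : Finset (Finset (Fin n)))
    (O : Finset (Fin n) → Finset (Fin n) × Finset (Fin n)) : Prop :=
  ¬ ∃ a b, OArc G O a b ∧
    Relation.ReflTransGen (fun x y => HeadEqv G O x y ∨ OArc G O x y) b a

/-!
The index of the block containing a vertex is a rank function for the orientation. Each head
`U ∩ A_i` lies in the single block `A_i`, so the rank is constant on the classes of `[n]/O`; each
tail vertex of `U` lies in a block of index `≥ i` by minimality of `i`, and not in `A_i`, so every
arc strictly increases the rank. A directed cycle would therefore have rank strictly below itself,
and a class of `[n]/O`, having constant rank, lies inside one block.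
-/

section Rank

variable {G : Finset (Finset (Fin n))} {O : Finset (Fin n) → Finset (Fin n) × Finset (Fin n)}
  {β : Type*} {rank : Fin n → β}

theorem HeadEqv.rank_eq (hhead : ∀ U ∈ G, ∀ a ∈ (O U).1, ∀ b ∈ (O U).1, rank a = rank b)
    {a b : Fin n} (h : HeadEqv G O a b) : rank a = rank b :=
  congrArg (Quot.lift rank fun a b ⟨U, hU, ha, hb⟩ => hhead U hU a ha b hb)
    (Quot.eqvGen_sound h)

variable [Preorder β]

theorem OArc.rank_lt (hhead : ∀ U ∈ G, ∀ a ∈ (O U).1, ∀ b ∈ (O U).1, rank a = rank b)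
    (harc : ∀ U ∈ G, ∀ a ∈ (O U).1, ∀ b ∈ (O U).2, rank a < rank b)
    {a b : Fin n} (h : OArc G O a b) : rank a < rank b := by
  obtain ⟨U, hU, a', haa', ha', hb⟩ := h
  exact haa'.rank_eq hhead ▸ harc U hU a' ha' b hb

theorem acyclicO_of_rank (hhead : ∀ U ∈ G, ∀ a ∈ (O U).1, ∀ b ∈ (O U).1, rank a = rank b)
    (harc : ∀ U ∈ G, ∀ a ∈ (O U).1, ∀ b ∈ (O U).2, rank a < rank b) :
    AcyclicO G O := by
  rintro ⟨a, b, hab, hba⟩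
  have hmono : Relation.ReflTransGen (· ≤ ·) (rank b) (rank a) :=
    hba.lift rank fun x y hxy =>
      hxy.elim (fun h => (h.rank_eq hhead).le) fun h => (h.rank_lt hhead harc).le
  rw [Relation.reflTransGen_eq_self] at hmono
  exact (hab.rank_lt hhead harc).not_ge hmono

end Rank

section BlockIdx

variable {α : Type*} [DecidableEq α] {L : List (Finset α)} {v w : α}

theorem List.mem_foldr_union_iff : v ∈ L.foldr (· ∪ ·) ∅ ↔ ∃ A ∈ L, v ∈ A := by
  induction L <;> simp_all

def blockIdx (L : List (Finset α)) (v : α) : ℕ := L.findIdx (v ∈ ·)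

theorem blockIdx_eq_of_mem_get (hdisj : L.Pairwise Disjoint) {i : Fin L.length}
    (hv : v ∈ L.get i) : blockIdx L v = i := by
  refine (List.findIdx_eq i.isLt).2 ⟨by simpa using hv, fun j hji => ?_⟩
  have hdisj_ji := List.pairwise_iff_get.1 hdisj ⟨j, hji.trans i.isLt⟩ i hji
  simpa using Finset.disjoint_right.1 hdisj_ji hv

theorem blockIdx_lt_length (hv : ∃ A ∈ L, v ∈ A) : blockIdx L v < L.length :=
  List.findIdx_lt_length_of_exists (by simpa using hv)

theorem mem_get_blockIdx (hv : ∃ A ∈ L, v ∈ A) :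
    v ∈ L.get ⟨blockIdx L v, blockIdx_lt_length hv⟩ :=
  of_decide_eq_true <|
    List.findIdx_getElem (p := fun A => decide (v ∈ A)) (xs := L) (w := blockIdx_lt_length hv)

theorem mem_of_blockIdx_eq (hdisj : L.Pairwise Disjoint) (hwL : ∃ B ∈ L, w ∈ B)
    {A : Finset α} (hA : A ∈ L) (hv : v ∈ A) (h : blockIdx L v = blockIdx L w) : w ∈ A := by
  obtain ⟨i, rfl⟩ := List.mem_iff_get.1 hA
  have hwi : (⟨blockIdx L w, blockIdx_lt_length hwL⟩ : Fin L.length) = i :=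
    Fin.ext (h.symm.trans (blockIdx_eq_of_mem_get hdisj hv))
  exact hwi ▸ mem_get_blockIdx hwL

theorem blockIdx_lt_of_mem_sdiff (hdisj : L.Pairwise Disjoint) (hwL : ∃ B ∈ L, w ∈ B)
    {U : Finset α} {i : Fin L.length} (hmin : ∀ j : Fin L.length, j < i → U ∩ L.get j = ∅)
    (hv : v ∈ U ∩ L.get i) (hw : w ∈ U \ L.get i) : blockIdx L v < blockIdx L w := by
  rw [Finset.mem_sdiff] at hw
  set k : Fin L.length := ⟨blockIdx L w, blockIdx_lt_length hwL⟩
  have hk : w ∈ L.get k := mem_get_blockIdx hwL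
  have hik : i ≤ k := not_lt.1 fun hki =>
    Finset.notMem_empty w (hmin k hki ▸ Finset.mem_inter.2 ⟨hw.1, hk⟩)
  have hne : i ≠ k := fun hik_eq => hw.2 (hik_eq ▸ hk)
  rw [blockIdx_eq_of_mem_get hdisj (Finset.mem_inter.1 hv).2]
  exact Fin.lt_def.1 (lt_of_le_of_ne hik hne)

end BlockIdx

theorem stmt17_general (L : List (Finset (Fin n)))
    (hdisj : List.Pairwise Disjoint L)
    (hcover : L.foldr (· ∪ ·) ∅ = Finset.univ)
    (G' : Finset (Finset (Fin n)))
    (O : Finset (Fin n) → Finset (Fin n) × Finset (Fin n))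
    (hO : ∀ U ∈ G', ∃ i : Fin L.length,
      (U ∩ L.get i).Nonempty ∧
      (∀ j : Fin L.length, j < i → U ∩ L.get j = ∅) ∧
      O U = (U ∩ L.get i, U \ L.get i)) :
    AcyclicO G' O ∧
      ∀ v w : Fin n, HeadEqv G' O v w → ∀ A ∈ L, (v ∈ A ↔ w ∈ A) := by
  have hcov (v : Fin n) : ∃ A ∈ L, v ∈ A :=
    List.mem_foldr_union_iff.1 (hcover ▸ Finset.mem_univ v)
  have hhead : ∀ U ∈ G', ∀ a ∈ (O U).1, ∀ b ∈ (O U).1, blockIdx L a = blockIdx L b := by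
    intro U hU a ha b hb
    obtain ⟨i, -, -, hOU⟩ := hO U hU
    rw [hOU, Finset.mem_inter] at ha hb
    rw [blockIdx_eq_of_mem_get hdisj ha.2, blockIdx_eq_of_mem_get hdisj hb.2]
  have harc : ∀ U ∈ G', ∀ a ∈ (O U).1, ∀ b ∈ (O U).2, blockIdx L a < blockIdx L b := by
    intro U hU a ha b hb
    obtain ⟨i, -, hmin, hOU⟩ := hO U hU
    rw [hOU] at ha hb
    exact blockIdx_lt_of_mem_sdiff hdisj (hcov b) hmin ha hb
  refine ⟨acyclicO_of_rank hhead harc, fun v w hvw A hA => ?_⟩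
  have hidx := hvw.rank_eq hhead
  exact ⟨fun hv => mem_of_blockIdx_eq hdisj (hcov w) hA hv hidx,
    fun hw => mem_of_blockIdx_eq hdisj (hcov v) hA hw hidx.symm⟩

/-- The map `Ω` is well defined: given a set composition `(A_1,…,A_k)` of
`[n]`, orienting each non-contracted hyperedge `U` as
`(U ∩ A_i, U \ A_i)` for the minimal `i` with `A_i ∩ U ≠ ∅` yields an
oriented graph with no directed cycle, whose partition `[n]/Ω(A)` refines
`{A_1,…,A_k}`. -/
theorem stmt17 (G : Finset (Finset (Fin n))) (L : List (Finset (Fin n)))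
    (hne : ∀ A ∈ L, A.Nonempty)
    (hdisj : List.Pairwise Disjoint L)
    (hcover : L.foldr (· ∪ ·) ∅ = Finset.univ)
    (G' : Finset (Finset (Fin n)))
    (hG' : ∀ U, U ∈ G' ↔ U ∈ G ∧ ¬ ∃ A ∈ L, U ⊆ A)
    (O : Finset (Fin n) → Finset (Fin n) × Finset (Fin n))
    (hO : ∀ U ∈ G', ∃ i : Fin L.length,
      (U ∩ L.get i).Nonempty ∧
      (∀ j : Fin L.length, j < i → U ∩ L.get j = ∅) ∧
      O U = (U ∩ L.get i, U \ L.get i)) :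
    AcyclicO G' O ∧
      ∀ v w : Fin n, HeadEqv G' O v w → ∀ A ∈ L, (v ∈ A ↔ w ∈ A) :=
  stmt17_general L hdisj hcover G' O hO
end
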